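/- arXiv:math/9801047 — 11 statements merged into one kernel-verified Lean document; each statement's English description precedes it below -/
import Mathlib

section
/- Let (X,S) be nondegenerate and involutive. Then for all i, i', j, j' ∈ X: there exists a pair (k,l) ∈ X × X with S(l,j) = (k,i) and S(k,i') = (l,j') if and only if i = i' and j = j'; moreover, when i = i' and j = j' such a pair (k,l) is unique. (This is the crossing symmetry property (1.7).) -/
/-- `(X,S)` is nondegenerate: writing `S (x,y) = (g_x y, f_y x)`, every `f_y` and
every `g_x` is a bijection of `X`. -/
def Nondeg {X : Type*} (S : X × X → X × X) : Prop :=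
  (∀ y : X, Function.Bijective fun x => (S (x, y)).2) ∧
  (∀ x : X, Function.Bijective fun y => (S (x, y)).1)

/-- `(X,S)` is involutive: `S ∘ S = id`. -/
def Invol {X : Type*} (S : X × X → X × X) : Prop := S ∘ S = id

/-- Crossing symmetry (1.7): for nondegenerate involutive `(X,S)`, a pair `(k,l)` with
`S(l,j) = (k,i)` and `S(k,i') = (l,j')` exists iff `i = i'` and `j = j'`, and in that
case it is unique. -/
theorem crossing_symmetry {X : Type*} (S : X × X → X × X)
    (hnd : Nondeg S) (hinv : Invol S) (i i' j j' : X) :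
    ((∃ k l : X, S (l, j) = (k, i) ∧ S (k, i') = (l, j')) ↔ (i = i' ∧ j = j')) ∧
    ((i = i' ∧ j = j') →
      ∃! p : X × X, S (p.2, j) = (p.1, i) ∧ S (p.1, i') = (p.2, j')) := by
  have hSS : ∀ p : X × X, S (S p) = p := fun p => congrFun hinv p
  constructor
  · constructor
    · rintro ⟨k, l, h1, h2⟩
      -- involutivity: S(k,i) = (l,j)
      have h3 : S (k, i) = (l, j) := by
        have := hSS (l, j); rw [h1] at this; exact this
      -- first components: g_k i = g_k i' = l
      have hii : i = i' := by
        apply (hnd.2 k).1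
        show (S (k, i)).1 = (S (k, i')).1
        rw [h3, h2]
      subst hii
      have hjj : j = j' := by
        have := h3.symm.trans h2
        exact congrArg Prod.snd this
      exact ⟨rfl, hjj⟩
    · rintro ⟨rfl, rfl⟩
      obtain ⟨l, hl⟩ := (hnd.1 j).2 i
      refine ⟨(S (l, j)).1, l, ?_, ?_⟩
      · exact Prod.ext rfl hl
      · have h1 : S (l, j) = ((S (l, j)).1, i) := Prod.ext rfl hl
        have := hSS (l, j); rw [h1] at this
        exact this
  · rintro ⟨rfl, rfl⟩
    obtain ⟨l, hl⟩ := (hnd.1 j).2 i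
    refine ⟨((S (l, j)).1, l), ⟨Prod.ext rfl hl, ?_⟩, ?_⟩
    · have h1 : S (l, j) = ((S (l, j)).1, i) := Prod.ext rfl hl
      have := hSS (l, j); rw [h1] at this; exact this
    · rintro ⟨k', l'⟩ ⟨h1, h2⟩
      have hl' : l' = l := by
        apply (hnd.1 j).1
        show (S (l', j)).2 = (S (l, j)).2
        rw [h1]; exact hl.symm
      subst hl'
      have : k' = (S (l', j)).1 := by rw [h1]
      simp [this]
end

section
/- Let (X,S) be nondegenerate and involutive. Then: (1) for all i, j, k ∈ X, if S(i,k) = (j,k) then i = j; and (2) for every i ∈ X there exists a unique k ∈ X such that S(i,k) = (i,k). (Equivalently, the number of k with S(i,k) = (j,k) equals δ_{ij}.) -/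
/-- Statement (1.8): for nondegenerate involutive `(X,S)`, if `S(i,k) = (j,k)` then
`i = j`, and for every `i` there is a unique `k` with `S(i,k) = (i,k)`. -/
theorem fixed_second_component {X : Type*} (S : X × X → X × X)
    (hnd : Nondeg S) (hinv : Invol S) :
    (∀ i j k : X, S (i, k) = (j, k) → i = j) ∧
    (∀ i : X, ∃! k : X, S (i, k) = (i, k)) := by
  have hSS : ∀ p : X × X, S (S p) = p := fun p => congrFun hinv p
  constructor
  · intro i j k h
    -- S (j,k) = S (S (i,k)) = (i,k)
    have h2 : S (j, k) = (i, k) := by rw [← h, hSS]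
    -- f_k i = k and f_k j = k
    have hf := (hnd.1 k).1
    have : (S (i, k)).2 = (S (j, k)).2 := by rw [h, h2]
    exact hf this
  · intro i
    obtain ⟨k, hk⟩ := (hnd.2 i).2 i
    simp only at hk
    -- S (i,k) = (i, m) for m = (S (i,k)).2
    set m := (S (i, k)).2 with hm
    have hik : S (i, k) = (i, m) := by
      ext <;> simp [hk, hm]
    have him : S (i, m) = (i, k) := by rw [← hik, hSS]
    have hmk : m = k := (hnd.2 i).1 (by simp only [hk]; simpa using congrArg Prod.fst him)
    refine ⟨k, ?_, ?_⟩
    · show S (i, k) = (i, k)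
      rw [hik, hmk]
    intro y hy
    exact (hnd.2 i).1 (by simpa [hk] using congrArg Prod.fst hy)
end

section
/- Let (X,S) be a symmetric set and n ≥ 1. Define J_n : Xⁿ → Xⁿ by (J_n(x_1,…,x_n))_i = (f_{x_n} ∘ f_{x_{n-1}} ∘ ⋯ ∘ f_{x_{i+1}})(x_i) for 1 ≤ i < n, and (J_n(x_1,…,x_n))_n = x_n. Then for every i with 1 ≤ i ≤ n−1, J_n ∘ S^{i,i+1} = σ^{i,i+1} ∘ J_n, where σ^{i,i+1} : Xⁿ → Xⁿ transposes the i-th and (i+1)-th coordinates. -/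
/-- `S^{12} : X³ → X³`, applying `S` to the first two coordinates. -/
def S12 {X : Type*} (S : X × X → X × X) : X × X × X → X × X × X :=
  fun p => ((S (p.1, p.2.1)).1, (S (p.1, p.2.1)).2, p.2.2)

/-- `S^{23} : X³ → X³`, applying `S` to the last two coordinates. -/
def S23 {X : Type*} (S : X × X → X × X) : X × X × X → X × X × X :=
  fun p => (p.1, (S (p.2.1, p.2.2)).1, (S (p.2.1, p.2.2)).2)

/-- `(X,S)` is braided: `S^{12} S^{23} S^{12} = S^{23} S^{12} S^{23}`. -/
def Braided {X : Type*} (S : X × X → X × X) : Prop :=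
  S12 S ∘ S23 S ∘ S12 S = S23 S ∘ S12 S ∘ S23 S

/-- The map `J_n : Xⁿ → Xⁿ` of (1.16):
`(J_n x)_i = f_{x_n} ∘ ⋯ ∘ f_{x_{i+1}} (x_i)`, where `f_y(x) = (S (x,y)).2`
(indices `0,…,n-1`, applied over all `j > i` in increasing order). -/
def Jmap {X : Type*} (S : X × X → X × X) (n : ℕ) (x : Fin n → X) : Fin n → X :=
  fun i =>
    List.foldl (fun a j => (S (a, x j)).2) (x i)
      ((List.finRange n).filter fun j => decide (i < j))

/-- The map `S^{i,i+1} : Xⁿ → Xⁿ`, applying `S` in the `i`-th and `(i+1)`-th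
coordinates (0-indexed) and the identity elsewhere. -/
def Sii {X : Type*} (S : X × X → X × X) (n i : ℕ) (h : i + 1 < n)
    (x : Fin n → X) : Fin n → X := fun j =>
  if j = (⟨i, by omega⟩ : Fin n) then (S (x ⟨i, by omega⟩, x ⟨i + 1, h⟩)).1
  else if j = (⟨i + 1, h⟩ : Fin n) then (S (x ⟨i, by omega⟩, x ⟨i + 1, h⟩)).2
  else x j

lemma filter_finRange_eq_drop (n : ℕ) (k : Fin n) :
    ((List.finRange n).filter fun j => decide (k < j)) =
      (List.finRange n).drop (k.val + 1) := by
  induction n with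
  | zero => simp
  | succ m ih =>
    rw [List.finRange_succ]
    rcases Fin.eq_zero_or_eq_succ k with hk | ⟨k', rfl⟩
    · subst hk
      simp only [List.filter_cons, Fin.lt_def, Fin.val_zero]
      norm_num
      exact fun a ha => Nat.pos_of_ne_zero (fun hz => ha (Fin.ext hz))
    · simp only [List.filter_cons]
      have h0 : ¬ (k'.succ < (0 : Fin (m+1))) := by simp
      have hjj : ∀ j : Fin m, (decide (k'.succ < j.succ)) = decide (k' < j) := by
        intro j; simp [Fin.succ_lt_succ_iff]
      simp only [h0, decide_false, List.filter_map]
      rw [show ((fun j : Fin (m+1) => decide (k'.succ < j)) ∘ Fin.succ)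
          = fun j : Fin m => decide (k' < j) from funext hjj, ih k']
      simp [Fin.val_succ, List.drop_succ_cons]

lemma Jmap_eq {X : Type*} (S : X × X → X × X) (n : ℕ) (x : Fin n → X) (k : Fin n) :
    Jmap S n x k =
      List.foldl (fun a y => (S (a, y)).2) (x k) ((List.ofFn x).drop (k.val + 1)) := by
  unfold Jmap
  rw [filter_finRange_eq_drop, List.ofFn_eq_map, ← List.map_drop, List.foldl_map]

lemma braid3 {X : Type*} {S : X × X → X × X} (hbr : Braided S) (a b c : X) :
    (S ((S (a, (S (b, c)).1)).2, (S (b, c)).2)).2 = (S ((S (a, b)).2, c)).2 := by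
  have h := congrFun hbr (a, b, c)
  simp only [Function.comp_apply, S12, S23] at h
  exact (congrArg (fun p => p.2.2) h).symm

lemma inv2 {X : Type*} {S : X × X → X × X} (hinv : Invol S) (b c : X) :
    S ((S (b, c)).1, (S (b, c)).2) = (b, c) := by
  have h := congrFun hinv (b, c)
  simpa using h

lemma fold_core {X : Type*} {S : X × X → X × X} (hbr : Braided S) (b c : X)
    (A B : List X) (a : X) :
    List.foldl (fun a y => (S (a, y)).2) a (A ++ (S (b, c)).1 :: (S (b, c)).2 :: B) =
      List.foldl (fun a y => (S (a, y)).2) a (A ++ b :: c :: B) := by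
  rw [List.foldl_append, List.foldl_append]
  simp only [List.foldl_cons]
  rw [braid3 hbr]

/-- Proposition 1.7: for a symmetric set `(X,S)`,
`J_n ∘ S^{i,i+1} = σ^{i,i+1} ∘ J_n`, where `σ^{i,i+1}` transposes the `i`-th
and `(i+1)`-th coordinates. -/
theorem Jmap_conjugates {X : Type*} (S : X × X → X × X)
    (hbr : Braided S) (hinv : Invol S) (n i : ℕ) (h : i + 1 < n) :
    Jmap S n ∘ Sii S n i h =
      (fun x : Fin n → X =>
        x ∘ Equiv.swap (⟨i, by omega⟩ : Fin n) ⟨i + 1, h⟩) ∘ Jmap S n := by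
  have hi : i < n := by omega
  funext x k
  show Jmap S n (Sii S n i h x) k
      = Jmap S n x (Equiv.swap (⟨i, hi⟩ : Fin n) ⟨i + 1, h⟩ k)
  set fi : Fin n := ⟨i, hi⟩ with hfi
  set fi1 : Fin n := ⟨i + 1, h⟩ with hfi1
  have hx'1 : Sii S n i h x fi = (S (x fi, x fi1)).1 := by
    simp [Sii, hfi, hfi1]
  have hx'2 : Sii S n i h x fi1 = (S (x fi, x fi1)).2 := by
    simp [Sii, hfi, hfi1, Fin.ext_iff]
  have hx'o : ∀ j : Fin n, j.val ≠ i → j.val ≠ i + 1 → Sii S n i h x j = x j := by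
    intro j h1 h2
    simp [Sii, Fin.ext_iff, h1, h2]
  have hlen : (List.ofFn x).length = n := by simp
  have hlen' : (List.ofFn (Sii S n i h x)).length = n := by simp
  have htake : (List.ofFn (Sii S n i h x)).take i = (List.ofFn x).take i := by
    apply List.ext_getElem
    · simp
    · intro t h1 h2
      simp only [List.getElem_take, List.getElem_ofFn]
      exact hx'o _ (show t ≠ i by simp only [List.length_take, hlen'] at h1; omega)
        (show t ≠ i + 1 by simp only [List.length_take, hlen'] at h1; omega)
  have hdropB : (List.ofFn (Sii S n i h x)).drop (i + 2) = (List.ofFn x).drop (i + 2) := by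
    apply List.ext_getElem
    · simp
    · intro t h1 h2
      simp only [List.getElem_drop, List.getElem_ofFn]
      exact hx'o _ (show i + 2 + t ≠ i by omega) (show i + 2 + t ≠ i + 1 by omega)
  have h2d : (List.ofFn x).drop (i + 1) = x fi1 :: (List.ofFn x).drop (i + 2) := by
    rw [List.drop_eq_getElem_cons (by omega)]
    simp only [List.getElem_ofFn]
    rfl
  have h1d : (List.ofFn x).drop i = x fi :: (List.ofFn x).drop (i + 1) := by
    rw [List.drop_eq_getElem_cons (by omega)]
    simp only [List.getElem_ofFn]
    rfl
  have h1d' : (List.ofFn (Sii S n i h x)).drop i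
      = (S (x fi, x fi1)).1 :: (S (x fi, x fi1)).2 :: (List.ofFn x).drop (i + 2) := by
    rw [List.drop_eq_getElem_cons (by omega), List.drop_eq_getElem_cons (by omega)]
    rw [hdropB]
    simp only [List.getElem_ofFn]
    rw [show (⟨i, by omega⟩ : Fin n) = fi from rfl, show (⟨i + 1, by omega⟩ : Fin n) = fi1 from rfl,
      hx'1, hx'2]
  have hl : List.ofFn x
      = (List.ofFn x).take i ++ x fi :: x fi1 :: (List.ofFn x).drop (i + 2) := by
    conv_lhs => rw [← List.take_append_drop i (List.ofFn x)]
    rw [h1d, h2d]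
  have hl' : List.ofFn (Sii S n i h x)
      = (List.ofFn x).take i
        ++ (S (x fi, x fi1)).1 :: (S (x fi, x fi1)).2 :: (List.ofFn x).drop (i + 2) := by
    conv_lhs => rw [← List.take_append_drop i (List.ofFn (Sii S n i h x))]
    rw [h1d', htake]
  rw [Jmap_eq, Jmap_eq]
  rcases Nat.lt_trichotomy k.val i with hki | hki | hki
  · -- k < i
    have hsw : Equiv.swap fi fi1 k = k :=
      Equiv.swap_apply_of_ne_of_ne (by simp [hfi, Fin.ext_iff]; omega)
        (by simp [hfi1, Fin.ext_iff]; omega)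
    rw [hsw, hx'o k (by omega) (by omega)]
    have hd' : (List.ofFn (Sii S n i h x)).drop (k.val + 1)
        = ((List.ofFn x).take i).drop (k.val + 1)
          ++ (S (x fi, x fi1)).1 :: (S (x fi, x fi1)).2 :: (List.ofFn x).drop (i + 2) := by
      conv_lhs => rw [hl']
      rw [List.drop_append_of_le_length (by simp [hlen]; omega)]
    have hd : (List.ofFn x).drop (k.val + 1)
        = ((List.ofFn x).take i).drop (k.val + 1)
          ++ x fi :: x fi1 :: (List.ofFn x).drop (i + 2) := by
      conv_lhs => rw [hl]
      rw [List.drop_append_of_le_length (by simp [hlen]; omega)]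
    rw [hd', hd, fold_core hbr]
  · -- k = i
    have hk : k = fi := Fin.ext hki
    subst hk
    rw [Equiv.swap_apply_left]
    have hdd : (List.ofFn (Sii S n i h x)).drop (fi.val + 1)
        = (S (x fi, x fi1)).2 :: (List.ofFn x).drop (i + 2) := by
      rw [show fi.val + 1 = i + 1 from rfl]
      rw [List.drop_eq_getElem_cons (by omega), hdropB]
      simp only [List.getElem_ofFn]
      rw [show (⟨i + 1, by omega⟩ : Fin n) = fi1 from rfl, hx'2]
    rw [hdd, hx'1]
    simp only [List.foldl_cons]
    rw [inv2 hinv]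
  · rcases Nat.eq_or_lt_of_le hki with hki2 | hki2
    · -- k = i + 1
      have hk : k = fi1 := Fin.ext hki2.symm
      subst hk
      rw [Equiv.swap_apply_right]
      rw [show fi1.val + 1 = i + 2 from rfl, hdropB, hx'2,
        show fi.val + 1 = i + 1 from rfl, h2d]
      simp only [List.foldl_cons]
    · -- k > i + 1
      have hsw : Equiv.swap fi fi1 k = k :=
        Equiv.swap_apply_of_ne_of_ne (by simp [hfi, Fin.ext_iff]; omega)
          (by simp [hfi1, Fin.ext_iff]; omega)
      rw [hsw, hx'o k (by omega) (by omega)]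
      have hdd := congrArg (List.drop (k.val - i - 1)) hdropB
      rw [List.drop_drop, List.drop_drop] at hdd
      rw [show k.val + 1 = i + 2 + (k.val - i - 1) by omega, hdd]
end

section
/- Let X be a set and S : X × X → X × X an involutive map with S(x,y) = (g_x(y), f_y(x)), such that every f_x is a bijection and f_y ∘ f_x = f_{f_y(x)} ∘ f_{g_x(y)} for all x, y ∈ X. Define T : X → X by T(y) = f_y^{-1}(y). Then: (a) f_x^{-1} ∘ T = T ∘ g_x for every x ∈ X; and (b) if in addition every g_x is a bijection, then T is a bijection with inverse given by T^{-1}(z) = g_z^{-1}(z). -/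
/-- The map `f_y : X → X`, where `S (x,y) = (g_x y, f_y x)`. -/
def fm {X : Type*} (S : X × X → X × X) (y : X) : X → X := fun x => (S (x, y)).2

/-- The map `g_x : X → X`, where `S (x,y) = (g_x y, f_y x)`. -/
def gm {X : Type*} (S : X × X → X × X) (x : X) : X → X := fun y => (S (x, y)).1

/-- Proposition 2.2 (a),(b): if `S` is involutive, every `f_x` is a bijection, and
`f_y ∘ f_x = f_{f_y(x)} ∘ f_{g_x(y)}`, then for `T(y) = f_y⁻¹(y)` (characterized by
`f_y (T y) = y`): (a) `f_x⁻¹ ∘ T = T ∘ g_x`, i.e. `f_x (T (g_x y)) = T y`; and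
(b) if moreover every `g_x` is a bijection, then `T` is a bijection with inverse
`T⁻¹(z) = g_z⁻¹(z)`, i.e. `g_z a = z → T a = z`. -/
theorem Tmap_properties {X : Type*} (S : X × X → X × X)
    (hinv : Invol S)
    (hf : ∀ y : X, Function.Bijective (fm S y))
    (hcomm : ∀ x y : X, fm S y ∘ fm S x = fm S (fm S y x) ∘ fm S (gm S x y))
    (T : X → X) (hT : ∀ y : X, fm S y (T y) = y) :
    (∀ x y : X, fm S x (T (gm S x y)) = T y) ∧
    ((∀ x : X, Function.Bijective (gm S x)) →
      Function.Bijective T ∧ ∀ z a : X, gm S z a = z → T a = z) := by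
  have hSS : ∀ p : X × X, S (S p) = p := fun p => congrFun hinv p
  have hinv2 : ∀ x y : X, fm S (fm S y x) (gm S x y) = y := by
    intro x y
    have h : S (gm S x y, fm S y x) = (x, y) := by
      have := hSS (x, y)
      simpa [fm, gm] using this
    have := congrArg Prod.snd h
    simpa [fm] using this
  have parta : ∀ x y : X, fm S x (T (gm S x y)) = T y := by
    intro x y
    apply (hf y).1
    have h1 := congrFun (hcomm x y) (T (gm S x y))
    simp only [Function.comp_apply] at h1
    rw [hT (gm S x y)] at h1
    rw [h1, hinv2, hT]
  refine ⟨parta, fun hg => ?_⟩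
  have key : ∀ z a : X, gm S z a = z → T a = z := by
    intro z a h
    have h1 := parta z a
    rw [h, hT] at h1
    exact h1.symm
  refine ⟨⟨?_, ?_⟩, key⟩
  · intro a b hab
    have ha : gm S (T a) a = T a := by
      apply (hf a).1
      have := hinv2 (T a) a
      rw [hT a] at this
      rw [this, hT a]
    have hb : gm S (T b) b = T b := by
      apply (hf b).1
      have := hinv2 (T b) b
      rw [hT b] at this
      rw [this, hT b]
    rw [← hab] at hb
    exact (hg (T a)).1 (ha.trans hb.symm)
  · intro z
    obtain ⟨a, ha⟩ := (hg z).2 z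
    exact ⟨a, key z a ha⟩
end

section
/- Let (X,S) be a nondegenerate symmetric set. Then there exists a group homomorphism Φ : G_X → M_X such that for every generator x ∈ X, Φ(x) = ι(f_x^{-1}) · κ(e_x), where ι : Perm(X) → M_X and κ : ℤ^{(X)} → M_X are the canonical inclusions into the semidirect product. Equivalently, in M_X one has ι(f_x^{-1})κ(e_x) · ι(f_y^{-1})κ(e_y) = ι(f_u^{-1})κ(e_u) · ι(f_v^{-1})κ(e_v) whenever S(x,y) = (u,v). -/
/-- The defining relations of the structure group: `x·y = t·z` whenever `S(x,y) = (t,z)`. -/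
def structRels {X : Type*} (S : X × X → X × X) : Set (FreeGroup X) :=
  {r | ∃ x y : X,
    r = FreeGroup.of x * FreeGroup.of y *
      (FreeGroup.of ((S (x, y)).1) * FreeGroup.of ((S (x, y)).2))⁻¹}

/-- The structure group `G_X` of `(X,S)`. -/
abbrev StructureGroup {X : Type*} (S : X × X → X × X) : Type _ :=
  PresentedGroup (structRels S)

/-- The action of `Perm X` on the free abelian group `ℤ^{(X)}` permuting the basis,
as a homomorphism into `MulAut (Multiplicative (X →₀ ℤ))`. -/
noncomputable def permMulHom (X : Type*) :
    Equiv.Perm X →* MulAut (Multiplicative (X →₀ ℤ)) where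
  toFun σ := AddEquiv.toMultiplicative (Finsupp.domCongr σ)
  map_one' := by
    refine MulEquiv.ext fun t => ?_
    show Multiplicative.ofAdd
        (Finsupp.equivMapDomain (Equiv.refl X) (Multiplicative.toAdd t)) = t
    rw [Finsupp.equivMapDomain_refl]
    rfl
  map_mul' σ τ := by
    refine MulEquiv.ext fun t => ?_
    show Multiplicative.ofAdd
        (Finsupp.equivMapDomain (τ.trans σ) (Multiplicative.toAdd t)) =
      Multiplicative.ofAdd
        (Finsupp.equivMapDomain σ (Finsupp.equivMapDomain τ (Multiplicative.toAdd t)))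
    rw [Finsupp.equivMapDomain_trans]

/-- `M_X = Perm(X) ⋉ ℤ^{(X)}`. -/
abbrev MX (X : Type*) : Type _ :=
  SemidirectProduct (Multiplicative (X →₀ ℤ)) (Equiv.Perm X) (permMulHom X)

/-- The canonical inclusion `ι : Perm(X) → M_X`. -/
noncomputable def iotaMX {X : Type*} : Equiv.Perm X →* MX X := SemidirectProduct.inr

/-- The canonical inclusion `κ : ℤ^{(X)} → M_X`. -/
noncomputable def kappaMX {X : Type*} (t : X →₀ ℤ) : MX X :=
  SemidirectProduct.inl (Multiplicative.ofAdd t)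

/-- The permutation `f_x` of `X`, for a nondegenerate `(X,S)`. -/
noncomputable def fperm {X : Type*} (S : X × X → X × X) (hnd : Nondeg S) (x : X) : Equiv.Perm X :=
  Equiv.ofBijective (fun a => (S (a, x)).2) (hnd.1 x)


section AuxProof

variable {X : Type*}

lemma fperm_apply' (S : X × X → X × X) (hnd : Nondeg S) (x a : X) :
    fperm S hnd x a = (S (a, x)).2 := rfl

lemma fperm_comp' (S : X × X → X × X) (hnd : Nondeg S) (hbr : Braided S) (x y a : X) :
    fperm S hnd y (fperm S hnd x a) =
      fperm S hnd ((S (x, y)).2) (fperm S hnd ((S (x, y)).1) a) := by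
  have h := congrFun hbr (a, x, y)
  have h2 := congrArg (fun p : X × X × X => p.2.2) h
  simpa [S12, S23, Function.comp, fperm_apply'] using h2

lemma fperm_mul' (S : X × X → X × X) (hnd : Nondeg S) (hbr : Braided S) (x y : X) :
    fperm S hnd y * fperm S hnd x =
      fperm S hnd ((S (x, y)).2) * fperm S hnd ((S (x, y)).1) :=
  Equiv.ext fun a => fperm_comp' S hnd hbr x y a

lemma iota_kappa_mk (σ : Equiv.Perm X) (t : X →₀ ℤ) :
    iotaMX σ * kappaMX t =
      (⟨Multiplicative.ofAdd (Finsupp.equivMapDomain σ t), σ⟩ : MX X) := by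
  apply SemidirectProduct.ext
  · simp [iotaMX, kappaMX, SemidirectProduct.mul_left, SemidirectProduct.left_inr,
      SemidirectProduct.right_inr, SemidirectProduct.left_inl]
    rfl
  · simp [iotaMX, kappaMX, SemidirectProduct.mul_right, SemidirectProduct.right_inr,
      SemidirectProduct.right_inl]

lemma prod_form (σ τ : Equiv.Perm X) (s t : X →₀ ℤ) :
    (iotaMX σ * kappaMX s) * (iotaMX τ * kappaMX t) =
      iotaMX (σ * τ) * kappaMX (Finsupp.equivMapDomain τ⁻¹ s + t) := by
  rw [iota_kappa_mk, iota_kappa_mk, iota_kappa_mk]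
  apply SemidirectProduct.ext
  · show Multiplicative.ofAdd (Finsupp.equivMapDomain σ s) *
      (permMulHom X) σ (Multiplicative.ofAdd (Finsupp.equivMapDomain τ t)) = _
    have h1 : (permMulHom X) σ (Multiplicative.ofAdd (Finsupp.equivMapDomain τ t)) =
        Multiplicative.ofAdd (Finsupp.equivMapDomain σ (Finsupp.equivMapDomain τ t)) := rfl
    have hfin : Finsupp.equivMapDomain σ s +
        Finsupp.equivMapDomain σ (Finsupp.equivMapDomain τ t) =
        Finsupp.equivMapDomain (σ * τ : Equiv.Perm X) (Finsupp.equivMapDomain τ⁻¹ s + t) := by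
      ext a
      simp [Finsupp.equivMapDomain_apply, Equiv.Perm.mul_def, Equiv.Perm.inv_def,
        Equiv.symm_trans_apply]
    rw [h1, ← ofAdd_add, hfin]
  · rfl

lemma keyEq (S : X × X → X × X) (hnd : Nondeg S) (hbr : Braided S) (hinv : Invol S)
    (x y u v : X) (h : S (x, y) = (u, v)) :
    (iotaMX (fperm S hnd x)⁻¹ * kappaMX (Finsupp.single x 1)) *
      (iotaMX (fperm S hnd y)⁻¹ * kappaMX (Finsupp.single y 1)) =
    (iotaMX (fperm S hnd u)⁻¹ * kappaMX (Finsupp.single u 1)) *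
      (iotaMX (fperm S hnd v)⁻¹ * kappaMX (Finsupp.single v 1)) := by
  have hSuv : S (u, v) = (x, y) := by
    rw [← h]
    exact congrFun hinv (x, y)
  have hv : fperm S hnd y x = v := by
    rw [fperm_apply', h]
  have hy : fperm S hnd v u = y := by
    rw [fperm_apply', hSuv]
  have hmul : fperm S hnd y * fperm S hnd x = fperm S hnd v * fperm S hnd u := by
    have := fperm_mul' S hnd hbr x y
    rwa [h] at this
  have hmulinv : (fperm S hnd x)⁻¹ * (fperm S hnd y)⁻¹ =
      (fperm S hnd u)⁻¹ * (fperm S hnd v)⁻¹ := by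
    rw [← mul_inv_rev, ← mul_inv_rev, hmul]
  rw [prod_form, prod_form, hmulinv, inv_inv, inv_inv,
    Finsupp.equivMapDomain_single, Finsupp.equivMapDomain_single, hv, hy, add_comm]

end AuxProof

/-- Proposition 2.3: for a nondegenerate symmetric set `(X,S)`, the assignment
`x ↦ ι(f_x⁻¹)·κ(e_x)` extends to a group homomorphism `G_X → M_X`; equivalently,
`ι(f_x⁻¹)κ(e_x)·ι(f_y⁻¹)κ(e_y) = ι(f_u⁻¹)κ(e_u)·ι(f_v⁻¹)κ(e_v)` whenever `S(x,y) = (u,v)`. -/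


theorem exists_hom_to_MX {X : Type*} (S : X × X → X × X)
    (hnd : Nondeg S) (hbr : Braided S) (hinv : Invol S) :
    (∃ Φ : StructureGroup S →* MX X,
      ∀ x : X, Φ (PresentedGroup.of x) =
        iotaMX (fperm S hnd x)⁻¹ * kappaMX (Finsupp.single x 1)) ∧
    (∀ x y u v : X, S (x, y) = (u, v) →
      (iotaMX (fperm S hnd x)⁻¹ * kappaMX (Finsupp.single x 1)) *
        (iotaMX (fperm S hnd y)⁻¹ * kappaMX (Finsupp.single y 1)) =
      (iotaMX (fperm S hnd u)⁻¹ * kappaMX (Finsupp.single u 1)) *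
        (iotaMX (fperm S hnd v)⁻¹ * kappaMX (Finsupp.single v 1))) := by
  constructor
  · refine ⟨PresentedGroup.toGroup (f := fun x => iotaMX (fperm S hnd x)⁻¹ *
      kappaMX (Finsupp.single x 1)) ?_, fun x => PresentedGroup.toGroup.of _⟩
    rintro r ⟨x, y, rfl⟩
    obtain ⟨u, v, h⟩ : ∃ u v, S (x, y) = (u, v) := ⟨_, _, rfl⟩
    rw [h]
    simp only [map_mul, map_inv, FreeGroup.lift_apply_of]
    rw [mul_inv_eq_one]
    simpa only [map_inv] using keyEq S hnd hbr hinv x y u v h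
  · exact fun x y u v h => keyEq S hnd hbr hinv x y u v h
end

section
/- Let (X,S) be a finite nondegenerate symmetric set. Then (X,S) is indecomposable (i.e., X cannot be written as the union of two disjoint nonempty invariant subsets) if and only if the subgroup of Perm(X) generated by {f_x : x ∈ X} acts transitively on X. -/
/-- `Y` is an invariant subset: `S(Y × Y) ⊆ Y × Y`. -/
def InvSubset {X : Type*} (S : X × X → X × X) (Y : Set X) : Prop :=
  ∀ a ∈ Y, ∀ b ∈ Y, (S (a, b)).1 ∈ Y ∧ (S (a, b)).2 ∈ Y

/-- A permutation of a finite type mapping a set into itself maps it onto itself. -/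
lemma perm_image_eq_of_mapsTo {X : Type*} [Fintype X] (σ : Equiv.Perm X) (Y : Set X)
    (h : Set.MapsTo σ Y Y) : σ '' Y = Y := by
  apply Set.eq_of_subset_of_ncard_le (Set.image_subset_iff.mpr h)
  rw [Set.ncard_image_of_injective _ σ.injective]

/-- Proposition 2.11: a finite nondegenerate symmetric set `(X,S)` is indecomposable
iff the subgroup of `Perm X` generated by `{f_x : x ∈ X}` acts transitively on `X`. -/
theorem indecomposable_iff_transitive {X : Type*} [Fintype X] (S : X × X → X × X)
    (hnd : Nondeg S) (hbr : Braided S) (hinv : Invol S) :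
    (¬ ∃ Y₁ Y₂ : Set X, Y₁.Nonempty ∧ Y₂.Nonempty ∧ Disjoint Y₁ Y₂ ∧
        Y₁ ∪ Y₂ = Set.univ ∧ InvSubset S Y₁ ∧ InvSubset S Y₂) ↔
    (∀ x y : X, ∃ σ ∈ Subgroup.closure
        {σ : Equiv.Perm X | ∃ a : X, ∀ b : X, σ b = (S (b, a)).2}, σ x = y) := by
  classical
  set Gen : Set (Equiv.Perm X) := {σ : Equiv.Perm X | ∃ a : X, ∀ b : X, σ b = (S (b, a)).2}
    with hGenDef
  set G := Subgroup.closure Gen with hGDef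
  have hfa : ∀ a : X, ∃ σ : Equiv.Perm X, (∀ b, σ b = (S (b, a)).2) ∧ σ ∈ G := by
    intro a
    exact ⟨Equiv.ofBijective _ (hnd.1 a), fun b => rfl,
      Subgroup.subset_closure ⟨a, fun b => rfl⟩⟩
  constructor
  · -- indecomposable → transitive
    intro hindec x y
    by_contra hno
    set Y₁ : Set X := {z | ∃ σ ∈ G, σ x = z} with hY₁
    have hstab : ∀ σ ∈ G, ∀ z ∈ Y₁, σ z ∈ Y₁ := by
      rintro σ hσ z ⟨τ, hτ, rfl⟩
      exact ⟨σ * τ, mul_mem hσ hτ, rfl⟩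
    have hstab' : ∀ σ ∈ G, ∀ z, σ z ∈ Y₁ → z ∈ Y₁ := by
      intro σ hσ z hz
      have := hstab σ⁻¹ (inv_mem hσ) _ hz
      simpa using this
    have hinvsub : ∀ Y : Set X, (∀ σ ∈ G, ∀ z ∈ Y, σ z ∈ Y) →
        (∀ σ ∈ G, ∀ z, σ z ∈ Y → z ∈ Y) → InvSubset S Y := by
      intro Y h1 h2 a ha b hb
      obtain ⟨πb, hπb, hπbG⟩ := hfa b
      constructor
      · obtain ⟨πd, hπd, hπdG⟩ := hfa (S (a, b)).2
        have hS : S (S (a, b)) = (a, b) := congrFun hinv (a, b)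
        have hkey : πd (S (a, b)).1 = b := by
          rw [hπd]
          have h1' : ((S (a, b)).1, (S (a, b)).2) = S (a, b) := rfl
          rw [h1', hS]
        exact h2 πd hπdG _ (by rw [hkey]; exact hb)
      · have h := h1 πb hπbG a ha
        rwa [hπb a] at h
    have hxY : x ∈ Y₁ := ⟨1, one_mem G, rfl⟩
    have hyY : y ∉ Y₁ := hno
    apply hindec
    refine ⟨Y₁, Y₁ᶜ, ⟨x, hxY⟩, ⟨y, hyY⟩, disjoint_compl_right, Set.union_compl_self _,
      hinvsub Y₁ hstab hstab', hinvsub Y₁ᶜ ?_ ?_⟩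
    · intro σ hσ z hz hmem
      exact hz (hstab' σ hσ z hmem)
    · intro σ hσ z hz hmem
      exact hz (hstab σ hσ z hmem)
  · -- transitive → indecomposable
    rintro htrans ⟨Y₁, Y₂, ⟨x, hx⟩, ⟨y, hy⟩, hdisj, huniv, hi1, hi2⟩
    have hY₁compl : Y₁ = Y₂ᶜ := by
      ext z
      constructor
      · intro hz hz2
        exact Set.disjoint_left.mp hdisj hz hz2
      · intro hz
        rcases (Set.eq_univ_iff_forall.mp huniv z) with h | h
        · exact h
        · exact absurd h hz
    have hgen : ∀ σ ∈ Gen, σ '' Y₁ = Y₁ := by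
      rintro σ ⟨a, hσa⟩
      rcases (Set.eq_univ_iff_forall.mp huniv a) with ha | ha
      · apply perm_image_eq_of_mapsTo
        intro b hb
        have := (hi1 b hb a ha).2
        rwa [← hσa b] at this
      · have h2 : σ '' Y₂ = Y₂ := by
          apply perm_image_eq_of_mapsTo
          intro b hb
          have := (hi2 b hb a ha).2
          rwa [← hσa b] at this
        rw [hY₁compl, Set.image_compl_eq σ.bijective, h2]
    have key : ∀ σ ∈ G, σ '' Y₁ = Y₁ := by
      intro σ hσ
      induction hσ using Subgroup.closure_induction with
      | mem σ hσ => exact hgen σ hσ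
      | one => simp
      | mul σ τ _ _ hσ hτ => rw [Equiv.Perm.coe_mul, Set.image_comp, hτ, hσ]
      | inv σ _ hσ =>
        conv_lhs => rw [← hσ]
        rw [← Set.image_comp]
        simp
    obtain ⟨σ, hσG, hσxy⟩ := htrans x y
    have : y ∈ Y₁ := by
      rw [← key σ hσG]
      exact ⟨x, hx, hσxy⟩
    exact Set.disjoint_left.mp hdisj this hy
end

section
/- Let (X,S) be a finite nondegenerate symmetric set with |X| = N, and let n be a nonnegative integer. Then the set of elements of the structure group G_X that are representable as a product of exactly n generators, i.e. {w ∈ G_X : w = x₁ x₂ ⋯ x_n for some x₁, …, x_n ∈ X}, has exactly binomial(n + N − 1, n) elements. -/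
namespace CardProdAux

variable {X : Type*} (S : X × X → X × X)

/-- The left action permutation `g_x`. -/
noncomputable def gm (hnd : Nondeg S) (x : X) : Equiv.Perm X :=
  Equiv.ofBijective (fun y => (S (x, y)).1) (hnd.2 x)

lemma gm_apply (hnd : Nondeg S) (x y : X) : gm S hnd x y = (S (x, y)).1 := rfl

lemma inv_pair (hinv : Invol S) (x y : X) :
    S ((S (x, y)).1, (S (x, y)).2) = (x, y) := by
  have := congrFun hinv (x, y)
  simpa using this

lemma gm_inv1 (hnd : Nondeg S) (hinv : Invol S) (x y : X) :
    gm S hnd (S (x, y)).1 (S (x, y)).2 = x := by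
  rw [gm_apply]
  exact congrArg Prod.fst (inv_pair S hinv x y)

lemma gm_braid (hnd : Nondeg S) (hbr : Braided S) (x y : X) :
    gm S hnd (S (x, y)).1 * gm S hnd (S (x, y)).2 = gm S hnd x * gm S hnd y := by
  ext w
  have := congrFun hbr (x, y, w)
  simpa [S12, S23, gm_apply, Function.comp] using congrArg Prod.fst this

/-- inverse guitar transform -/
noncomputable def El (σ : X → Equiv.Perm X) : List X → List X
  | [] => []
  | z :: l => z :: El σ (l.map (σ z).symm)
termination_by l => l.length
decreasing_by simp

/-- guitar transform -/
def Dl (σ : X → Equiv.Perm X) : List X → List X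
  | [] => []
  | x :: l => x :: (Dl σ l).map (σ x)

lemma El_nil (σ : X → Equiv.Perm X) : El σ [] = [] := by rw [El]

lemma El_cons (σ : X → Equiv.Perm X) (z : X) (l : List X) :
    El σ (z :: l) = z :: El σ (l.map (σ z).symm) := by rw [El]

lemma El_length (σ : X → Equiv.Perm X) (l : List X) : (El σ l).length = l.length := by
  induction l using El.induct σ with
  | case1 => simp [El_nil]
  | case2 z l ih => simp [El_cons]; simpa using ih

lemma El_Dl (σ : X → Equiv.Perm X) (l : List X) : El σ (Dl σ l) = l := by
  induction l with
  | nil => simp [Dl, El_nil]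
  | cons x l ih =>
      simp [Dl, El_cons, List.map_map]
      simpa using ih

lemma Dl_El (σ : X → Equiv.Perm X) (l : List X) : Dl σ (El σ l) = l := by
  induction l using El.induct σ with
  | case1 => simp [El_nil, Dl]
  | case2 z l ih => simp at ih; simp [El_cons, Dl, ih, List.map_map]

lemma gen_rel (x y : X) :
    (PresentedGroup.of (rels := structRels S) x) * PresentedGroup.of y =
      PresentedGroup.of (S (x, y)).1 * PresentedGroup.of (S (x, y)).2 := by
  have h : (QuotientGroup.mk (FreeGroup.of x * FreeGroup.of y *
      (FreeGroup.of ((S (x, y)).1) * FreeGroup.of ((S (x, y)).2))⁻¹) :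
      StructureGroup S) = 1 := by
    rw [QuotientGroup.eq_one_iff]
    exact Subgroup.subset_normalClosure ⟨x, y, rfl⟩
  have h2 : (PresentedGroup.of (rels := structRels S) x) * PresentedGroup.of y *
      ((PresentedGroup.of (rels := structRels S) (S (x, y)).1) *
        PresentedGroup.of (S (x, y)).2)⁻¹ = 1 := by
    exact h
  exact mul_inv_eq_one.mp h2

/-- The group element associated to a "z-list". -/
noncomputable def Pl (hnd : Nondeg S) (l : List X) : StructureGroup S :=
  ((El (gm S hnd) l).map (PresentedGroup.of (rels := structRels S))).prod

lemma Pl_nil (hnd : Nondeg S) : Pl S hnd [] = 1 := by simp [Pl, El_nil]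

lemma Pl_cons (hnd : Nondeg S) (z : X) (l : List X) :
    Pl S hnd (z :: l) =
      PresentedGroup.of (rels := structRels S) z * Pl S hnd (l.map ((gm S hnd z).symm)) := by
  simp [Pl, El_cons]

lemma Pl_swap (hnd : Nondeg S) (hbr : Braided S) (hinv : Invol S) (a b : X) (l : List X) :
    Pl S hnd (a :: b :: l) = Pl S hnd (b :: a :: l) := by
  set σ := gm S hnd with hσ
  have key : ∀ a b : X, (σ a) ((σ a).symm b) = b := fun a b => Equiv.apply_symm_apply _ _
  -- abbreviations
  set y := (σ a).symm b with hy
  set y' := (σ b).symm a with hy'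
  have h1 : (S (a, y)).1 = b := by rw [← gm_apply S hnd]; exact key a b
  have h2 : (S (a, y)).2 = y' := by
    have := gm_inv1 S hnd hinv a y
    rw [h1] at this
    rw [hy']
    exact ((Equiv.symm_apply_eq _).mpr this.symm).symm
  have hhead : (PresentedGroup.of (rels := structRels S) a) * PresentedGroup.of y =
      PresentedGroup.of b * PresentedGroup.of y' := by
    rw [gen_rel S a y, h1, h2]
  have hbraid : σ b * σ y' = σ a * σ y := by
    have := gm_braid S hnd hbr a y
    rwa [h1, h2] at this
  have htails : (σ y)⁻¹ * (σ a)⁻¹ = (σ y')⁻¹ * (σ b)⁻¹ := by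
    rw [← mul_inv_rev, ← mul_inv_rev, hbraid]
  have htail : (l.map (σ a).symm).map (σ y).symm = (l.map (σ b).symm).map (σ y').symm := by
    rw [List.map_map, List.map_map]
    congr 1
    have : ((σ y)⁻¹ * (σ a)⁻¹ : Equiv.Perm X) = ((σ y')⁻¹ * (σ b)⁻¹ : Equiv.Perm X) := htails
    funext w
    have := congrArg (fun e : Equiv.Perm X => e w) this
    simpa [Equiv.Perm.inv_def] using this
  have hy2 : (σ b).symm ((σ b) y') = y' := Equiv.symm_apply_apply _ _
  calc Pl S hnd (a :: b :: l)
      = PresentedGroup.of a * (PresentedGroup.of y *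
          Pl S hnd ((l.map (σ a).symm).map (σ y).symm)) := by
        rw [Pl_cons, List.map_cons, Pl_cons, ← hy]
    _ = PresentedGroup.of b * (PresentedGroup.of y' *
          Pl S hnd ((l.map (σ b).symm).map (σ y').symm)) := by
        rw [htail, ← mul_assoc, ← mul_assoc, hhead]
    _ = Pl S hnd (b :: a :: l) := by
        rw [Pl_cons, List.map_cons, Pl_cons, ← hy']

lemma Pl_perm (hnd : Nondeg S) (hbr : Braided S) (hinv : Invol S) {l l' : List X}
    (h : l.Perm l') : Pl S hnd l = Pl S hnd l' := by
  set σ := gm S hnd with hσ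
  have key : ∀ {l l' : List X}, l.Perm l' → ∀ u : X → X,
      Pl S hnd (l.map u) = Pl S hnd (l'.map u) := by
    intro l l' h
    induction h with
    | nil => intro u; rfl
    | cons x h ih =>
        intro u
        rw [List.map_cons, List.map_cons, Pl_cons, Pl_cons, List.map_map, List.map_map,
          ih ((σ (u x)).symm ∘ u)]
    | swap x y l =>
        intro u
        rw [List.map_cons, List.map_cons, List.map_cons, List.map_cons]
        exact Pl_swap S hnd hbr hinv (u y) (u x) (l.map u)
    | trans h1 h2 ih1 ih2 => intro u; rw [ih1 u, ih2 u]
  simpa using key h id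


section Hom

open Classical in
/-- The affine permutation `v ↦ e_x + v ∘ g_x⁻¹` of `X → ℤ`. -/
noncomputable def fgen (hnd : Nondeg S) (x : X) : Equiv.Perm (X → ℤ) where
  toFun v := Pi.single x 1 + v ∘ (gm S hnd x).symm
  invFun w := (w - Pi.single x 1) ∘ (gm S hnd x)
  left_inv v := by
    funext a
    simp [Function.comp, Equiv.symm_apply_apply]
  right_inv w := by
    funext a
    simp [Function.comp, Equiv.apply_symm_apply]

open Classical in
lemma single_comp (e : Equiv.Perm X) (z a : X) :
    (Pi.single (M := fun _ => ℤ) z 1) (e.symm a) = (Pi.single (M := fun _ => ℤ) (e z) 1) a := by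
  simp only [Pi.single_apply]
  exact if_congr (Equiv.symm_apply_eq e) rfl rfl

open Classical in
lemma fgen_rels (hnd : Nondeg S) (hbr : Braided S) (hinv : Invol S) :
    ∀ r ∈ structRels S, FreeGroup.lift (fgen S hnd) r = 1 := by
  rintro r ⟨x, y, rfl⟩
  rw [map_mul, map_mul, map_inv, map_mul]
  simp only [FreeGroup.lift_apply_of]
  rw [mul_inv_eq_one]
  set σ := gm S hnd with hσ
  set t := (S (x, y)).1
  set z := (S (x, y)).2
  have hbr2 : σ t * σ z = σ x * σ y := gm_braid S hnd hbr x y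
  have hinv2 : σ t z = x := gm_inv1 S hnd hinv x y
  have ht : σ x y = t := rfl
  ext v a
  show (fgen S hnd x) ((fgen S hnd y) v) a = (fgen S hnd t) ((fgen S hnd z) v) a
  simp only [fgen, Equiv.coe_fn_mk, Pi.add_apply, Function.comp_apply]
  have c1 : (Pi.single (M := fun _ => ℤ) y 1) ((σ x).symm a)
      = (Pi.single (M := fun _ => ℤ) t 1) a := single_comp (σ x) y a
  have c2 : (Pi.single (M := fun _ => ℤ) z 1) ((σ t).symm a)
      = (Pi.single (M := fun _ => ℤ) x 1) a := by
    have h2 := single_comp (σ t) z a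
    rwa [hinv2] at h2
  have c3 : (σ y).symm ((σ x).symm a) = (σ z).symm ((σ t).symm a) := by
    have h1 : ((σ x * σ y)⁻¹ : Equiv.Perm X) a = ((σ t * σ z)⁻¹ : Equiv.Perm X) a := by
      rw [hbr2]
    simpa [mul_inv_rev, Equiv.Perm.inv_def] using h1
  rw [c1, c2, c3]
  ring

/-- The cocycle homomorphism. -/
noncomputable def Phi (hnd : Nondeg S) (hbr : Braided S) (hinv : Invol S) :
    StructureGroup S →* Equiv.Perm (X → ℤ) :=
  PresentedGroup.toGroup (fgen_rels S hnd hbr hinv)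

lemma Phi_of (hnd : Nondeg S) (hbr : Braided S) (hinv : Invol S) (x : X) :
    Phi S hnd hbr hinv (PresentedGroup.of x) = fgen S hnd x :=
  PresentedGroup.toGroup.of _

open Classical in
lemma sum_single_comp (e : Equiv.Perm X) (l : List X) :
    (l.map fun z => Pi.single z (1 : ℤ)).sum ∘ e.symm
      = (l.map fun z => Pi.single (e z) (1 : ℤ)).sum := by
  induction l with
  | nil => funext a; simp
  | cons z l ih =>
      funext a
      simp only [List.map_cons, List.sum_cons, Pi.add_apply, Function.comp_apply]
      rw [single_comp e z a]
      have := congrFun ih a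
      simpa using this

open Classical in
lemma J_prod (hnd : Nondeg S) (hbr : Braided S) (hinv : Invol S) (xs : List X) :
    Phi S hnd hbr hinv ((xs.map (PresentedGroup.of (rels := structRels S))).prod) 0
      = ((Dl (gm S hnd) xs).map fun z => Pi.single z (1 : ℤ)).sum := by
  induction xs with
  | nil => simp [Dl]
  | cons x xs ih =>
      rw [List.map_cons, List.prod_cons, map_mul, Phi_of]
      show (fgen S hnd x) (Phi S hnd hbr hinv _ 0) = _
      rw [ih]
      simp only [fgen, Equiv.coe_fn_mk, Dl, List.map_cons, List.sum_cons, List.map_map]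
      rw [sum_single_comp]
      rfl

open Classical in
lemma sum_single_count (l : List X) (a : X) :
    (l.map fun z => Pi.single z (1 : ℤ)).sum a = l.count a := by
  induction l with
  | nil => simp
  | cons z l ih =>
      simp only [List.map_cons, List.sum_cons, Pi.add_apply, ih, List.count_cons]
      rw [Pi.single_apply]
      by_cases h : a = z
      · simp [h, add_comm]
      · simp [h, Ne.symm h]

lemma Dl_length (σ : X → Equiv.Perm X) (l : List X) : (Dl σ l).length = l.length := by
  induction l with
  | nil => rfl
  | cons x l ih => simp [Dl, ih]

end Hom

end CardProdAux

open CardProdAux in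
/-- Section 2.9: for a finite nondegenerate symmetric set `X` with `|X| = N`, the set
`G_X^{+n}` of elements of the structure group representable as a product of exactly `n`
generators has exactly `binomial (n + N - 1) n` elements. -/
theorem card_products_of_generators {X : Type*} [Fintype X] (S : X × X → X × X)
    (hnd : Nondeg S) (hbr : Braided S) (hinv : Invol S)
    (N : ℕ) (hN : Fintype.card X = N) (n : ℕ) :
    Nat.card {w : StructureGroup S //
        ∃ xs : Fin n → X,
          w = (List.ofFn fun i => PresentedGroup.of (rels := structRels S) (xs i)).prod} =
      (n + N - 1).choose n := by
  classical
  set σ := gm S hnd with hσ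
  set gen : X → StructureGroup S := fun x => PresentedGroup.of (rels := structRels S) x
    with hgen
  -- `ψ` sends a multiset of size `n` to the corresponding product of generators
  have mem_of_list : ∀ l : List X, l.length = n →
      ∃ xs : Fin n → X,
        Pl S hnd l = (List.ofFn fun i => PresentedGroup.of (rels := structRels S) (xs i)).prod := by
    intro l hl
    have hlen : (El σ l).length = n := (El_length σ l).trans hl
    refine ⟨fun i => (El σ l).get (Fin.cast hlen.symm i), ?_⟩
    have hofn : (List.ofFn fun i => (El σ l).get (Fin.cast hlen.symm i)) = El σ l := by
      apply List.ext_getElem (by simp [hlen])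
      intro i h1 h2
      simp
    have : (List.ofFn fun i => gen ((El σ l).get (Fin.cast hlen.symm i)))
        = (El σ l).map gen := by
      have h2 : (List.ofFn fun i => gen ((El σ l).get (Fin.cast hlen.symm i)))
          = (List.ofFn fun i => (El σ l).get (Fin.cast hlen.symm i)).map gen :=
        (List.map_ofFn (g := gen)).symm
      rw [h2, hofn]
    rw [hgen] at this
    rw [this]
    rfl
  let psi : Sym X n → {w : StructureGroup S //
      ∃ xs : Fin n → X,
        w = (List.ofFn fun i => PresentedGroup.of (rels := structRels S) (xs i)).prod} :=
    fun m => ⟨Pl S hnd m.1.toList,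
      mem_of_list m.1.toList (by rw [Multiset.length_toList]; exact m.2)⟩
  have hJ : ∀ l : List X, Phi S hnd hbr hinv (Pl S hnd l) 0
      = (l.map fun z => Pi.single z (1 : ℤ)).sum := by
    intro l
    have := J_prod S hnd hbr hinv (El σ l)
    rw [Dl_El] at this
    exact this
  have hinj : Function.Injective psi := by
    intro m m' h
    have hPl : Pl S hnd m.1.toList = Pl S hnd m'.1.toList := congrArg Subtype.val h
    have hsum : ((m.1.toList).map fun z => Pi.single z (1 : ℤ)).sum
        = ((m'.1.toList).map fun z => Pi.single z (1 : ℤ)).sum := by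
      rw [← hJ, ← hJ, hPl]
    have hcount : ∀ a : X, m.1.toList.count a = m'.1.toList.count a := by
      intro a
      have := congrFun hsum a
      rw [sum_single_count, sum_single_count] at this
      exact_mod_cast this
    apply Subtype.ext
    rw [← Multiset.coe_toList m.1, ← Multiset.coe_toList m'.1]
    rw [Multiset.coe_eq_coe]
    exact List.perm_iff_count.mpr hcount
  have hsurj : Function.Surjective psi := by
    rintro ⟨w, xs, hw⟩
    refine ⟨⟨(Dl σ (List.ofFn xs) : Multiset X), ?_⟩, ?_⟩
    · show Multiset.card _ = n
      simp [Dl_length]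
    · apply Subtype.ext
      show Pl S hnd (Multiset.toList _) = w
      have hperm : (Multiset.toList (Dl σ (List.ofFn xs) : Multiset X)).Perm
          (Dl σ (List.ofFn xs)) := by
        rw [← Multiset.coe_eq_coe, Multiset.coe_toList]
      rw [Pl_perm S hnd hbr hinv hperm]
      show ((El σ (Dl σ (List.ofFn xs))).map _).prod = w
      rw [El_Dl, hw, List.map_ofFn]
      rfl
  have hcard : Nat.card (Sym X n) = Nat.card {w : StructureGroup S //
      ∃ xs : Fin n → X,
        w = (List.ofFn fun i => PresentedGroup.of (rels := structRels S) (xs i)).prod} :=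
    Nat.card_eq_of_bijective psi ⟨hinj, hsurj⟩
  rw [← hcard, Nat.card_eq_fintype_card, Sym.card_sym_eq_multichoose, hN,
    Nat.multichoose_eq, Nat.add_comm]
end

section
/- Let X be an abelian group and a, b, c, d ∈ End(X) additive endomorphisms, and define S : X × X → X × X by S(x,y) = (a x + b y, c x + d y). Then (X,S) is a nondegenerate symmetric set if and only if all of the following hold: b and c are bijective, (1 + a) ∘ b ∘ a = a ∘ b, b ∘ c = 1 − a², and (1 − a) ∘ d = −a. (Equivalently, given that b and c are invertible, these conditions say b a b^{-1} = a(1+a)^{-1}, c = b^{-1}(1 − a²), d = a(a−1)^{-1}, where 1 ± a are invertible since b c = 1 − a² is.) -/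
section Aux

variable {X : Type*} [AddCommGroup X]

private lemma LS.mulApply (f g : AddMonoid.End X) (x : X) : (f * g) x = f (g x) := rfl
private lemma LS.addApply (f g : AddMonoid.End X) (x : X) : (f + g) x = f x + g x := rfl
private lemma LS.subApply (f g : AddMonoid.End X) (x : X) : (f - g) x = f x - g x := rfl
private lemma LS.oneApply (x : X) : (1 : AddMonoid.End X) x = x := rfl
private lemma LS.zeroApply (x : X) : (0 : AddMonoid.End X) x = 0 := rfl

private lemma LS.isUnit_of_bij {f : AddMonoid.End X} (hf : Function.Bijective f) :
    IsUnit f := by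
  let e := AddEquiv.ofBijective (f : X →+ X) hf
  exact ⟨⟨f, e.symm.toAddMonoidHom, DFunLike.ext _ _ fun x => e.apply_symm_apply x,
    DFunLike.ext _ _ fun x => e.symm_apply_apply x⟩, rfl⟩

private lemma LS.unit_left_of_comm {R : Type*} [Monoid R] {x y : R} (h : x * y = y * x)
    (hu : IsUnit (x * y)) : IsUnit x := by
  obtain ⟨u, hu⟩ := hu
  have hcy : Commute (x * y) y := by rw [h]; exact Commute.mul_left (Commute.refl y) h
  have hcu : Commute (↑u : R) y := by rwa [hu]
  have h2 : (↑u⁻¹ : R) * y = y * ↑u⁻¹ := ((hcu.units_inv_left).eq)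
  refine isUnit_iff_exists.mpr ⟨y * ↑u⁻¹, ?_, ?_⟩
  · rw [← mul_assoc, ← hu, u.mul_inv]
  · rw [← h2, mul_assoc, ← h, ← hu, u.inv_mul]

open LS in
private lemma LS.backward_eqs (a b c d : AddMonoid.End X)
    (hb : Function.Bijective b) (hc : Function.Bijective c)
    (H1 : (1 + a) * b * a = a * b) (H2 : b * c = 1 - a ^ 2) (H3 : (1 - a) * d = -a) :
    (a * a + b * c = 1) ∧ (a * b + b * d = 0) ∧ (c * a + d * c = 0) ∧ (c * b + d * d = 1) ∧
    (a * a + b * (a * c) = a) ∧ (a * b + b * (a * d) = b * a) ∧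
    (c * a + d * (a * c) = a * c) ∧ (c * b + d * (a * d) = a * (d * a) + b * c) ∧
    (d * b = a * (d * b) + b * d) ∧ (c * d = c * (d * a) + d * c) ∧
    (d = c * (d * b) + d * d) := by
  obtain ⟨B, hB⟩ := LS.isUnit_of_bij hb
  obtain ⟨C, hC⟩ := LS.isUnit_of_bij hc
  -- units for 1 - a and 1 + a
  have hbcu : IsUnit ((1 - a) * (1 + a)) := by
    rw [show ((1:AddMonoid.End X) - a) * (1 + a) = 1 - a ^ 2 by noncomm_ring, ← H2]
    exact ⟨B * C, by rw [Units.val_mul, hB, hC]⟩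
  have comm1 : ((1:AddMonoid.End X) - a) * (1 + a) = (1 + a) * (1 - a) := by noncomm_ring
  have hUu : IsUnit ((1:AddMonoid.End X) - a) := LS.unit_left_of_comm comm1 hbcu
  have hVu : IsUnit ((1:AddMonoid.End X) + a) := LS.unit_left_of_comm comm1.symm (comm1 ▸ hbcu)
  obtain ⟨U, hU⟩ := hUu
  obtain ⟨V, hV⟩ := hVu
  have ha : a = 1 - (↑U : AddMonoid.End X) := by rw [hU]; noncomm_ring
  have huv2 : (↑U : AddMonoid.End X) + ↑V = 2 := by
    rw [hU, hV, show (2 : AddMonoid.End X) = 1 + 1 from one_add_one_eq_two.symm]; noncomm_ring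
  -- basic cancellations
  have hBb : (↑B⁻¹ : AddMonoid.End X) * b = 1 := by rw [← hB]; exact B.inv_mul
  have hbB : b * (↑B⁻¹ : AddMonoid.End X) = 1 := by rw [← hB]; exact B.mul_inv
  -- key relation
  have rK : (↑V : AddMonoid.End X) * (b * ↑U) = b := by
    rw [hU, hV]
    calc (1 + a) * (b * (1 - a)) = (1 + a) * b - (1 + a) * b * a := by noncomm_ring
      _ = (1 + a) * b - a * b := by rw [H1]
      _ = b := by noncomm_ring
  have r1 : b * (↑U : AddMonoid.End X) = ↑V⁻¹ * b := by
    calc b * (↑U : AddMonoid.End X) = ↑V⁻¹ * (↑V * (b * ↑U)) := by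
          rw [← mul_assoc, V.inv_mul, one_mul]
      _ = ↑V⁻¹ * b := by rw [rK]
  have r2 : b * (↑U⁻¹ : AddMonoid.End X) = ↑V * b := by
    calc b * (↑U⁻¹ : AddMonoid.End X) = (↑V * (b * ↑U)) * ↑U⁻¹ := by rw [rK]
      _ = (↑V * b) * (↑U * ↑U⁻¹) := by noncomm_ring
      _ = ↑V * b := by rw [U.mul_inv, mul_one]
  -- unit-level versions for inverse relations
  have r1u : B * U = V⁻¹ * B := Units.ext (by rw [Units.val_mul, Units.val_mul, hB]; exact r1)
  have r2u : B * U⁻¹ = V * B := Units.ext (by rw [Units.val_mul, Units.val_mul, hB]; exact r2)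
  have r3u : U * B⁻¹ = B⁻¹ * V⁻¹ := by
    have h := congrArg (fun t => B⁻¹ * t * B⁻¹) r1u
    simpa [mul_assoc] using h
  have r4u : U⁻¹ * B⁻¹ = B⁻¹ * V := by
    have h := congrArg (fun t => B⁻¹ * t * B⁻¹) r2u
    simpa [mul_assoc] using h
  have r3 : (↑U : AddMonoid.End X) * ↑B⁻¹ = ↑B⁻¹ * ↑V⁻¹ := by
    have := congrArg (Units.val) r3u; simpa [Units.val_mul] using this
  have r4 : (↑U⁻¹ : AddMonoid.End X) * ↑B⁻¹ = ↑B⁻¹ * ↑V := by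
    have := congrArg (Units.val) r4u; simpa [Units.val_mul] using this
  -- commutations
  have caU : Commute a (↑U : AddMonoid.End X) := by rw [hU]; exact (Commute.one_right a).sub_right (Commute.refl a)
  have caU' : a * (↑U⁻¹ : AddMonoid.End X) = ↑U⁻¹ * a := (caU.units_inv_right).eq
  have cUV : (↑U : AddMonoid.End X) * ↑V = ↑V * ↑U := by rw [hU, hV]; noncomm_ring
  have cUVc : Commute (↑U : AddMonoid.End X) ↑V := cUV
  have cVU' : (↑V : AddMonoid.End X) * ↑U⁻¹ = ↑U⁻¹ * ↑V := (cUVc.symm.units_inv_right).eq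
  have cUV' : (↑U : AddMonoid.End X) * ↑V⁻¹ = ↑V⁻¹ * ↑U := (cUVc.units_inv_right).eq
  -- closed forms for d and c
  have hd : d = 1 - (↑U⁻¹ : AddMonoid.End X) := by
    have h3 : (↑U : AddMonoid.End X) * d = ↑U - 1 := by
      rw [hU, H3]; noncomm_ring
    calc d = ↑U⁻¹ * (↑U * d) := by rw [← mul_assoc, U.inv_mul, one_mul]
      _ = ↑U⁻¹ * (↑U - 1) := by rw [h3]
      _ = 1 - ↑U⁻¹ := by rw [mul_sub, U.inv_mul, mul_one]
  have hcBUV : c = (↑B⁻¹ : AddMonoid.End X) * (↑U * ↑V) := by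
    have huvbc : (↑U : AddMonoid.End X) * ↑V = b * c := by rw [hU, hV, H2]; noncomm_ring
    calc c = ↑B⁻¹ * (b * c) := by rw [← mul_assoc, hBb, one_mul]
      _ = ↑B⁻¹ * (↑U * ↑V) := by rw [huvbc]
  -- auxiliary computations
  have hv'uv : (↑V⁻¹ : AddMonoid.End X) * (↑U * ↑V) = ↑U := by
    rw [← mul_assoc, ← cUV', mul_assoc, V.inv_mul, mul_one]
  have hvuv : (↑V : AddMonoid.End X) * (↑U * ↑V) = (↑U * ↑V) * ↑V := by
    rw [← mul_assoc, ← cUV]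
  have hwu' : (↑U * ↑V : AddMonoid.End X) * ↑U⁻¹ = ↑V := by
    rw [mul_assoc, cVU', ← mul_assoc, U.mul_inv, one_mul]
  have haB : a * (↑B⁻¹ : AddMonoid.End X) = ↑B⁻¹ - ↑B⁻¹ * ↑V⁻¹ := by
    rw [ha, sub_mul, one_mul, r3]
  have hub : (↑U : AddMonoid.End X) * b = 2 * b - b * ↑U⁻¹ := by
    have h2v : (↑U : AddMonoid.End X) = 2 - ↑V := by
      rw [← huv2]; noncomm_ring
    rw [h2v, sub_mul, r2]
  have hwb : (↑B⁻¹ : AddMonoid.End X) * ((↑U * ↑V) * b) = 2 * ↑U⁻¹ - ↑U⁻¹ * ↑U⁻¹ := by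
    calc (↑B⁻¹ : AddMonoid.End X) * ((↑U * ↑V) * b) = ↑B⁻¹ * (↑U * (↑V * b)) := by noncomm_ring
      _ = ↑B⁻¹ * (↑U * (b * ↑U⁻¹)) := by rw [← r2]
      _ = ↑B⁻¹ * ((↑U * b) * ↑U⁻¹) := by noncomm_ring
      _ = ↑B⁻¹ * ((2 * b - b * ↑U⁻¹) * ↑U⁻¹) := by rw [hub]
      _ = 2 * ((↑B⁻¹ * b) * ↑U⁻¹) - (↑B⁻¹ * b) * (↑U⁻¹ * ↑U⁻¹) := by noncomm_ring
      _ = 2 * ↑U⁻¹ - ↑U⁻¹ * ↑U⁻¹ := by rw [hBb, one_mul, one_mul]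
  have hcb : c * b = 2 * (↑U⁻¹ : AddMonoid.End X) - ↑U⁻¹ * ↑U⁻¹ := by
    calc c * b = ↑B⁻¹ * ((↑U * ↑V) * b) := by rw [hcBUV]; noncomm_ring
      _ = 2 * ↑U⁻¹ - ↑U⁻¹ * ↑U⁻¹ := hwb
  have hbd : b * d = -(a * b) := by
    rw [hd, mul_sub, mul_one, r2, hV]; noncomm_ring
  -- EI1
  have EI1 : a * a + b * c = 1 := by rw [H2]; noncomm_ring
  -- EI2
  have EI2 : a * b + b * d = 0 := by rw [hbd]; abel
  -- EI4
  have EI4 : c * b + d * d = 1 := by rw [hcb, hd]; noncomm_ring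
  -- EI3
  have EI3 : c * a + d * c = 0 := by
    rw [hcBUV, hd]
    have h1 : ((1:AddMonoid.End X) - ↑U⁻¹) * (↑B⁻¹ * (↑U * ↑V))
        = ↑B⁻¹ * (↑U * ↑V) - ↑B⁻¹ * (↑V * (↑U * ↑V)) := by
      calc ((1:AddMonoid.End X) - ↑U⁻¹) * (↑B⁻¹ * (↑U * ↑V))
          = ↑B⁻¹ * (↑U * ↑V) - (↑U⁻¹ * ↑B⁻¹) * (↑U * ↑V) := by noncomm_ring
        _ = ↑B⁻¹ * (↑U * ↑V) - (↑B⁻¹ * ↑V) * (↑U * ↑V) := by rw [r4]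
        _ = ↑B⁻¹ * (↑U * ↑V) - ↑B⁻¹ * (↑V * (↑U * ↑V)) := by noncomm_ring
    rw [h1, hvuv, ha]
    have hz : (↑U * ↑V : AddMonoid.End X) * (1 - ↑U)
        + ((↑U * ↑V) - (↑U * ↑V) * ↑V) = 0 := by
      calc (↑U * ↑V : AddMonoid.End X) * (1 - ↑U) + ((↑U * ↑V) - (↑U * ↑V) * ↑V)
          = (↑U * ↑V) * 2 - (↑U * ↑V) * (↑U + ↑V) := by noncomm_ring
        _ = 0 := by rw [huv2]; noncomm_ring
    calc (↑B⁻¹ * (↑U * ↑V) : AddMonoid.End X) * (1 - ↑U)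
        + (↑B⁻¹ * (↑U * ↑V) - ↑B⁻¹ * ((↑U * ↑V) * ↑V))
        = ↑B⁻¹ * ((↑U * ↑V) * (1 - ↑U) + ((↑U * ↑V) - (↑U * ↑V) * ↑V)) := by noncomm_ring
      _ = 0 := by rw [hz, mul_zero]
  -- a*c closed form
  have hac : a * c = ↑B⁻¹ * (↑U * ↑V - ↑U) := by
    rw [hcBUV]
    calc a * (↑B⁻¹ * (↑U * ↑V)) = (a * ↑B⁻¹) * (↑U * ↑V) := by noncomm_ring
      _ = (↑B⁻¹ - ↑B⁻¹ * ↑V⁻¹) * (↑U * ↑V) := by rw [haB]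
      _ = ↑B⁻¹ * (↑U * ↑V) - ↑B⁻¹ * (↑V⁻¹ * (↑U * ↑V)) := by noncomm_ring
      _ = ↑B⁻¹ * (↑U * ↑V) - ↑B⁻¹ * ↑U := by rw [hv'uv]
      _ = ↑B⁻¹ * (↑U * ↑V - ↑U) := by noncomm_ring
  -- EB1
  have EB1 : a * a + b * (a * c) = a := by
    have habc : b * (a * c) = ↑U * ↑V - ↑U := by
      calc b * (a * c) = b * (↑B⁻¹ * (↑U * ↑V - ↑U)) := by rw [hac]
        _ = (b * ↑B⁻¹) * (↑U * ↑V - ↑U) := by noncomm_ring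
        _ = ↑U * ↑V - ↑U := by rw [hbB, one_mul]
    rw [habc, ha]
    calc (1 - ↑U : AddMonoid.End X) * (1 - ↑U) + (↑U * ↑V - ↑U)
        = 1 - (1 + 1 + 1) * ↑U + ↑U * (↑U + ↑V) := by noncomm_ring
      _ = 1 - ↑U := by rw [huv2]; noncomm_ring
  -- EB2
  have EB2 : a * b + b * (a * d) = b * a := by
    have had : a * d = a - ↑U⁻¹ * a := by
      rw [hd, mul_sub, mul_one, caU']
    calc a * b + b * (a * d) = a * b + (b * a - (b * ↑U⁻¹) * a) := by
          rw [had]; noncomm_ring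
      _ = a * b + (b * a - ((1 + a) * b) * a) := by rw [r2, hV]
      _ = a * b + (b * a - (1 + a) * b * a) := by noncomm_ring
      _ = b * a := by rw [H1]; abel
  -- EB6
  have EB6 : d * b = a * (d * b) + b * d := by
    have h6 : (1 - a) * (d * b) = b * d := by
      calc (1 - a) * (d * b) = ((1 - a) * d) * b := by noncomm_ring
        _ = -a * b := by rw [H3]
        _ = b * d := by rw [hbd]; noncomm_ring
    calc d * b = a * (d * b) + (1 - a) * (d * b) := by noncomm_ring
      _ = a * (d * b) + b * d := by rw [h6]
  -- EB4
  have EB4 : c * a + d * (a * c) = a * c := by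
    rw [hac, hcBUV, hd]
    have h1 : ((1:AddMonoid.End X) - ↑U⁻¹) * (↑B⁻¹ * (↑U * ↑V - ↑U))
        = ↑B⁻¹ * (↑U * ↑V - ↑U) - ↑B⁻¹ * (↑V * (↑U * ↑V - ↑U)) := by
      calc ((1:AddMonoid.End X) - ↑U⁻¹) * (↑B⁻¹ * (↑U * ↑V - ↑U))
          = ↑B⁻¹ * (↑U * ↑V - ↑U) - (↑U⁻¹ * ↑B⁻¹) * (↑U * ↑V - ↑U) := by noncomm_ring
        _ = ↑B⁻¹ * (↑U * ↑V - ↑U) - (↑B⁻¹ * ↑V) * (↑U * ↑V - ↑U) := by rw [r4]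
        _ = ↑B⁻¹ * (↑U * ↑V - ↑U) - ↑B⁻¹ * (↑V * (↑U * ↑V - ↑U)) := by noncomm_ring
    rw [h1, ha]
    have hvz : (↑V : AddMonoid.End X) * (↑U * ↑V - ↑U) = (↑U * ↑V) * ↑V - ↑U * ↑V := by
      rw [mul_sub, hvuv, ← cUV]
    have hz : (↑U * ↑V : AddMonoid.End X) * (1 - ↑U)
        + ((↑U * ↑V - ↑U) - ↑V * (↑U * ↑V - ↑U)) = ↑U * ↑V - ↑U := by
      rw [hvz]
      calc (↑U * ↑V : AddMonoid.End X) * (1 - ↑U)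
          + ((↑U * ↑V - ↑U) - ((↑U * ↑V) * ↑V - ↑U * ↑V))
          = (1 + 1 + 1) * (↑U * ↑V) - ↑U - (↑U * ↑V) * (↑U + ↑V) := by noncomm_ring
        _ = ↑U * ↑V - ↑U := by rw [huv2]; noncomm_ring
    calc (↑B⁻¹ * (↑U * ↑V) : AddMonoid.End X) * (1 - ↑U)
        + (↑B⁻¹ * (↑U * ↑V - ↑U) - ↑B⁻¹ * (↑V * (↑U * ↑V - ↑U)))
        = ↑B⁻¹ * ((↑U * ↑V) * (1 - ↑U) + ((↑U * ↑V - ↑U) - ↑V * (↑U * ↑V - ↑U))) := by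
          noncomm_ring
      _ = ↑B⁻¹ * (↑U * ↑V - ↑U) := by rw [hz]
  -- expansions used by EB5 and EB7
  have e2 : ((1:AddMonoid.End X) - ↑U⁻¹) * (1 - ↑U) = 1 + 1 - ↑U - ↑U⁻¹ := by
    calc ((1:AddMonoid.End X) - ↑U⁻¹) * (1 - ↑U)
        = 1 - ↑U - ↑U⁻¹ + ↑U⁻¹ * ↑U := by noncomm_ring
      _ = 1 + 1 - ↑U - ↑U⁻¹ := by rw [U.inv_mul]; noncomm_ring
  -- EB5
  have EB5 : c * b + d * (a * d) = a * (d * a) + b * c := by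
    have e1 : ((1:AddMonoid.End X) - ↑U) * (1 - ↑U⁻¹) = 1 + 1 - ↑U - ↑U⁻¹ := by
      calc ((1:AddMonoid.End X) - ↑U) * (1 - ↑U⁻¹)
          = 1 - ↑U - ↑U⁻¹ + ↑U * ↑U⁻¹ := by noncomm_ring
        _ = 1 + 1 - ↑U - ↑U⁻¹ := by rw [U.mul_inv]; noncomm_ring
    have e3 : ((1:AddMonoid.End X) - ↑U⁻¹) * (1 + 1 - ↑U - ↑U⁻¹)
        = 1 + 1 + 1 - ↑U - (1 + 1 + 1) * ↑U⁻¹ + ↑U⁻¹ * ↑U⁻¹ := by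
      calc ((1:AddMonoid.End X) - ↑U⁻¹) * (1 + 1 - ↑U - ↑U⁻¹)
          = 1 + 1 - ↑U - (1 + 1 + 1) * ↑U⁻¹ + ↑U⁻¹ * ↑U + ↑U⁻¹ * ↑U⁻¹ := by noncomm_ring
        _ = 1 + 1 + 1 - ↑U - (1 + 1 + 1) * ↑U⁻¹ + ↑U⁻¹ * ↑U⁻¹ := by
            rw [U.inv_mul]; noncomm_ring
    have e4 : ((1:AddMonoid.End X) - ↑U) * (1 + 1 - ↑U - ↑U⁻¹)
        = 1 + 1 + 1 - (1 + 1 + 1) * ↑U - ↑U⁻¹ + ↑U * ↑U := by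
      calc ((1:AddMonoid.End X) - ↑U) * (1 + 1 - ↑U - ↑U⁻¹)
          = 1 + 1 - (1 + 1 + 1) * ↑U - ↑U⁻¹ + ↑U * ↑U + ↑U * ↑U⁻¹ := by noncomm_ring
        _ = 1 + 1 + 1 - (1 + 1 + 1) * ↑U - ↑U⁻¹ + ↑U * ↑U := by
            rw [U.mul_inv]; noncomm_ring
    calc c * b + d * (a * d)
        = (2 * ↑U⁻¹ - ↑U⁻¹ * ↑U⁻¹) + ((1 - ↑U⁻¹) * ((1 - ↑U) * (1 - ↑U⁻¹))) := by
          rw [hcb, hd, ha]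
      _ = (2 * ↑U⁻¹ - ↑U⁻¹ * ↑U⁻¹) + ((1 - ↑U⁻¹) * (1 + 1 - ↑U - ↑U⁻¹)) := by rw [e1]
      _ = (2 * ↑U⁻¹ - ↑U⁻¹ * ↑U⁻¹)
          + (1 + 1 + 1 - ↑U - (1 + 1 + 1) * ↑U⁻¹ + ↑U⁻¹ * ↑U⁻¹) := by rw [e3]
      _ = (1 + 1 + 1 - (1 + 1 + 1) * ↑U - ↑U⁻¹ + ↑U * ↑U) + (1 - (1 - ↑U) ^ 2) := by
          noncomm_ring
      _ = ((1 - ↑U) * (1 + 1 - ↑U - ↑U⁻¹)) + (1 - (1 - ↑U) ^ 2) := by rw [e4]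
      _ = ((1 - ↑U) * ((1 - ↑U⁻¹) * (1 - ↑U))) + (1 - (1 - ↑U) ^ 2) := by rw [e2]
      _ = a * (d * a) + b * c := by rw [H2, ha, hd]
  -- EB7
  have EB7 : c * d = c * (d * a) + d * c := by
    have hwd : (↑U * ↑V : AddMonoid.End X) * (1 - ↑U⁻¹) = ↑U * ↑V - ↑V := by
      rw [mul_sub, mul_one, hwu']
    have hcd : c * d = ↑B⁻¹ * (↑U * ↑V - ↑V) := by
      calc c * d = (↑B⁻¹ * (↑U * ↑V)) * (1 - ↑U⁻¹) := by rw [hcBUV, hd]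
        _ = ↑B⁻¹ * ((↑U * ↑V) * (1 - ↑U⁻¹)) := by noncomm_ring
        _ = ↑B⁻¹ * (↑U * ↑V - ↑V) := by rw [hwd]
    have hda : d * a = (1 - ↑U⁻¹ : AddMonoid.End X) * (1 - ↑U) := by rw [hd, ha]
    have hcda : c * (d * a)
        = ↑B⁻¹ * ((1 + 1) * (↑U * ↑V) - (↑U * ↑V) * ↑U - ↑V) := by
      calc c * (d * a) = (↑B⁻¹ * (↑U * ↑V)) * (1 + 1 - ↑U - ↑U⁻¹) := by
            rw [hcBUV, hda, e2]
        _ = ↑B⁻¹ * ((1 + 1) * (↑U * ↑V) - (↑U * ↑V) * ↑U - (↑U * ↑V) * ↑U⁻¹) := by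
            noncomm_ring
        _ = ↑B⁻¹ * ((1 + 1) * (↑U * ↑V) - (↑U * ↑V) * ↑U - ↑V) := by rw [hwu']
    have hdc : d * c = ↑B⁻¹ * (↑U * ↑V - (↑U * ↑V) * ↑V) := by
      calc d * c = (1 - ↑U⁻¹) * (↑B⁻¹ * (↑U * ↑V)) := by rw [hd, hcBUV]
        _ = ↑B⁻¹ * (↑U * ↑V) - (↑U⁻¹ * ↑B⁻¹) * (↑U * ↑V) := by noncomm_ring
        _ = ↑B⁻¹ * (↑U * ↑V) - (↑B⁻¹ * ↑V) * (↑U * ↑V) := by rw [r4]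
        _ = ↑B⁻¹ * (↑U * ↑V) - ↑B⁻¹ * ((↑U * ↑V) * ↑V) := by
            rw [show ((↑B⁻¹ * ↑V : AddMonoid.End X)) * (↑U * ↑V)
              = ↑B⁻¹ * (↑V * (↑U * ↑V)) from by noncomm_ring, hvuv]
        _ = ↑B⁻¹ * (↑U * ↑V - (↑U * ↑V) * ↑V) := by noncomm_ring
    rw [hcd, hcda, hdc]
    symm
    have hz : ((1 + 1) * (↑U * ↑V) - (↑U * ↑V) * ↑U - ↑V : AddMonoid.End X)
        + (↑U * ↑V - (↑U * ↑V) * ↑V) = ↑U * ↑V - ↑V := by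
      calc ((1 + 1) * (↑U * ↑V) - (↑U * ↑V) * ↑U - ↑V : AddMonoid.End X)
          + (↑U * ↑V - (↑U * ↑V) * ↑V)
          = (1 + 1 + 1) * (↑U * ↑V) - ↑V - (↑U * ↑V) * (↑U + ↑V) := by noncomm_ring
        _ = ↑U * ↑V - ↑V := by rw [huv2]; noncomm_ring
    calc ↑B⁻¹ * ((1 + 1) * (↑U * ↑V) - (↑U * ↑V) * ↑U - ↑V : AddMonoid.End X)
        + ↑B⁻¹ * (↑U * ↑V - (↑U * ↑V) * ↑V)
        = ↑B⁻¹ * (((1 + 1) * (↑U * ↑V) - (↑U * ↑V) * ↑U - ↑V)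
            + (↑U * ↑V - (↑U * ↑V) * ↑V)) := by noncomm_ring
      _ = ↑B⁻¹ * (↑U * ↑V - ↑V) := by rw [hz]
  -- EB8
  have EB8 : d = c * (d * b) + d * d := by
    have hwd : (↑U * ↑V : AddMonoid.End X) * (1 - ↑U⁻¹) = ↑U * ↑V - ↑V := by
      rw [mul_sub, mul_one, hwu']
    have h8 : c * (d * b) = ↑U⁻¹ - ↑U⁻¹ * ↑U⁻¹ := by
      calc c * (d * b) = (↑B⁻¹ * (↑U * ↑V)) * ((1 - ↑U⁻¹) * b) := by rw [hcBUV, hd]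
        _ = ↑B⁻¹ * (((↑U * ↑V) * (1 - ↑U⁻¹)) * b) := by noncomm_ring
        _ = ↑B⁻¹ * ((↑U * ↑V - ↑V) * b) := by rw [hwd]
        _ = ↑B⁻¹ * ((↑U * ↑V) * b) - ↑B⁻¹ * (↑V * b) := by noncomm_ring
        _ = (2 * ↑U⁻¹ - ↑U⁻¹ * ↑U⁻¹) - ↑B⁻¹ * (b * ↑U⁻¹) := by rw [hwb, ← r2]
        _ = (2 * ↑U⁻¹ - ↑U⁻¹ * ↑U⁻¹) - (↑B⁻¹ * b) * ↑U⁻¹ := by noncomm_ring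
        _ = ↑U⁻¹ - ↑U⁻¹ * ↑U⁻¹ := by rw [hBb, one_mul]; noncomm_ring
    rw [h8, hd]; noncomm_ring
  exact ⟨EI1, EI2, EI3, EI4, EB1, EB2, EB4, EB5, EB6, EB7, EB8⟩

open LS in
private lemma LS.assemble (a b c d : AddMonoid.End X) (S : X × X → X × X)
    (hS : ∀ x y : X, S (x, y) = (a x + b y, c x + d y))
    (hb : Function.Bijective b) (hc : Function.Bijective c)
    (EI1 : a * a + b * c = 1) (EI2 : a * b + b * d = 0)
    (EI3 : c * a + d * c = 0) (EI4 : c * b + d * d = 1)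
    (EB1 : a * a + b * (a * c) = a) (EB2 : a * b + b * (a * d) = b * a)
    (EB4 : c * a + d * (a * c) = a * c) (EB5 : c * b + d * (a * d) = a * (d * a) + b * c)
    (EB6 : d * b = a * (d * b) + b * d) (EB7 : c * d = c * (d * a) + d * c)
    (EB8 : d = c * (d * b) + d * d) :
    Nondeg S ∧ Braided S ∧ Invol S := by
  refine ⟨⟨fun y => ?_, fun x => ?_⟩, ?_, ?_⟩
  · have h : (fun x => (S (x, y)).2) = fun x => c x + d y := by
      funext x; rw [hS]
    rw [h]
    exact (Equiv.addRight (d y)).bijective.comp hc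
  · have h : (fun y => (S (x, y)).1) = fun y => b y + a x := by
      funext y; rw [hS]; exact add_comm _ _
    rw [h]
    exact (Equiv.addRight (a x)).bijective.comp hb
  · -- Braided
    funext p
    obtain ⟨x, y, z⟩ := p
    simp only [Function.comp_apply, S12, S23, hS, Prod.mk.injEq]
    refine ⟨?_, ?_, ?_⟩
    · calc a (a x + b y) + b (a (c x + d y) + b z)
          = (a * a + b * (a * c)) x + ((a * b + b * (a * d)) y + (b * b) z) := by
            simp only [map_add, LS.addApply, LS.mulApply]; abel
        _ = a x + ((b * a) y + (b * b) z) := by rw [EB1, EB2]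
        _ = a x + b (a y + b z) := by simp only [map_add, LS.mulApply]
    · calc c (a x + b y) + d (a (c x + d y) + b z)
          = (c * a + d * (a * c)) x + ((c * b + d * (a * d)) y + (d * b) z) := by
            simp only [map_add, LS.addApply, LS.mulApply]; abel
        _ = (a * c) x + ((a * (d * a) + b * c) y + (a * (d * b) + b * d) z) := by
            rw [EB4, EB5]; nth_rewrite 1 [EB6]; rfl
        _ = a (c x + d (a y + b z)) + b (c y + d z) := by
            simp only [map_add, LS.addApply, LS.mulApply]; abel
    · calc c (c x + d y) + d z
          = (c * c) x + ((c * d) y + d z) := by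
            simp only [map_add, LS.addApply, LS.mulApply]; abel
        _ = (c * c) x + ((c * (d * a) + d * c) y + (c * (d * b) + d * d) z) := by
            rw [← EB7, ← EB8]
        _ = c (c x + d (a y + b z)) + d (c y + d z) := by
            simp only [map_add, LS.addApply, LS.mulApply]; abel
  · -- Invol
    funext p
    obtain ⟨x, y⟩ := p
    simp only [Function.comp_apply, hS, id_eq, Prod.mk.injEq]
    constructor
    · calc a (a x + b y) + b (c x + d y)
          = (a * a + b * c) x + (a * b + b * d) y := by
            simp only [map_add, LS.addApply, LS.mulApply]; abel
        _ = x := by rw [EI1, EI2]; simp [LS.oneApply, LS.zeroApply]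
    · calc c (a x + b y) + d (c x + d y)
          = (c * a + d * c) x + (c * b + d * d) y := by
            simp only [map_add, LS.addApply, LS.mulApply]; abel
        _ = y := by rw [EI3, EI4]; simp [LS.oneApply, LS.zeroApply]

end Aux

/-- Propositions 3.1 and Corollary 3.2: for an abelian group `X` and additive
endomorphisms `a, b, c, d`, the linear map `S(x,y) = (ax + by, cx + dy)` is a
nondegenerate symmetric set iff `b` and `c` are bijective, `(1+a)ba = ab`,
`bc = 1 - a²`, and `(1-a)d = -a`. -/
theorem linear_solution_iff {X : Type*} [AddCommGroup X]
    (a b c d : AddMonoid.End X) (S : X × X → X × X)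
    (hS : ∀ x y : X, S (x, y) = (a x + b y, c x + d y)) :
    (Nondeg S ∧ Braided S ∧ Invol S) ↔
      (Function.Bijective b ∧ Function.Bijective c ∧
       (1 + a) * b * a = a * b ∧ b * c = 1 - a ^ 2 ∧ (1 - a) * d = -a) := by
  constructor
  · rintro ⟨⟨hnd1, hnd2⟩, hbr, hinv⟩
    have hb : Function.Bijective b := by
      have := hnd2 0
      simp only [hS, map_zero, zero_add] at this
      exact this
    have hc : Function.Bijective c := by
      have := hnd1 0
      simp only [hS, map_zero, add_zero] at this
      exact this
    have I1 : ∀ x : X, a (a x) + b (c x) = x := by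
      intro x
      have := congrFun hinv (x, 0)
      simp only [Function.comp_apply, hS, map_zero, add_zero, id_eq, Prod.mk.injEq] at this
      exact this.1
    have I2 : ∀ y : X, a (b y) + b (d y) = 0 := by
      intro y
      have := congrFun hinv (0, y)
      simp only [Function.comp_apply, hS, map_zero, zero_add, id_eq, Prod.mk.injEq] at this
      exact this.1
    have B1 : ∀ x : X, a (a x) + b (a (c x)) = a x := by
      intro x
      have := congrFun hbr (x, 0, 0)
      simp only [Function.comp_apply, S12, S23, hS, map_zero, add_zero, zero_add,
        Prod.mk.injEq] at this
      exact this.1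
    have B5 : ∀ z : X, d (b z) = a (d (b z)) + b (d z) := by
      intro z
      have := congrFun hbr (0, 0, z)
      simp only [Function.comp_apply, S12, S23, hS, map_zero, add_zero, zero_add,
        Prod.mk.injEq] at this
      exact this.2.1
    have hbU : IsUnit b := LS.isUnit_of_bij hb
    have hcU : IsUnit c := LS.isUnit_of_bij hc
    have H2 : b * c = 1 - a ^ 2 := by
      refine DFunLike.ext _ _ fun x => ?_
      have := I1 x
      simp only [LS.mulApply, LS.subApply, LS.oneApply, pow_two]
      exact eq_sub_of_add_eq' this
    have EB1 : b * (a * c) = a - a * a := by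
      refine DFunLike.ext _ _ fun x => ?_
      have := B1 x
      simp only [LS.mulApply, LS.subApply]
      exact eq_sub_of_add_eq' this
    have H1 : (1 + a) * b * a = a * b := by
      refine hcU.mul_right_cancel ?_
      calc (1 + a) * b * a * c = (1 + a) * (b * (a * c)) := by noncomm_ring
        _ = (1 + a) * (a - a * a) := by rw [EB1]
        _ = a * (1 - a ^ 2) := by noncomm_ring
        _ = a * (b * c) := by rw [H2]
        _ = a * b * c := by noncomm_ring
    have EB5 : d * b = a * (d * b) + b * d := by
      refine DFunLike.ext _ _ fun x => ?_
      have := B5 x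
      simp only [LS.mulApply, LS.addApply]
      exact this
    have EI2 : a * b + b * d = 0 := by
      refine DFunLike.ext _ _ fun x => ?_
      have := I2 x
      simp only [LS.mulApply, LS.addApply, LS.zeroApply]
      exact this
    have H3 : (1 - a) * d = -a := by
      refine hbU.mul_right_cancel ?_
      calc (1 - a) * d * b = d * b - a * (d * b) := by noncomm_ring
        _ = b * d := by nth_rewrite 1 [EB5]; abel
        _ = -(a * b) := by
            rw [eq_neg_of_add_eq_zero_left EI2, neg_neg]
        _ = -a * b := by noncomm_ring
    exact ⟨hb, hc, H1, H2, H3⟩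
  · rintro ⟨hb, hc, H1, H2, H3⟩
    obtain ⟨EI1, EI2, EI3, EI4, EB1, EB2, EB4, EB5, EB6, EB7, EB8⟩ :=
      LS.backward_eqs a b c d hb hc H1 H2 H3
    exact LS.assemble a b c d S hS hb hc EI1 EI2 EI3 EI4 EB1 EB2 EB4 EB5 EB6 EB7 EB8
end

section
/- Let a, b be N × N complex matrices with b invertible and 1 + a invertible, satisfying b a b^{-1} = a (1 + a)^{-1} (equivalently, a b = b a + a b a). Then a is nilpotent. -/
open Polynomial Matrix

/-- Lemma 3.4: if `a, b` are `N × N` complex matrices with `b` and `1 + a` invertible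
and `b a b⁻¹ = a (1 + a)⁻¹` (equation (3.8)), then `a` is nilpotent. -/
theorem nilpotent_of_conjugation_relation {N : ℕ}
    (a b : Matrix (Fin N) (Fin N) ℂ)
    (hb : IsUnit b) (ha : IsUnit (1 + a))
    (h : b * a * b⁻¹ = a * (1 + a)⁻¹) :
    IsNilpotent a := by
  classical
  -- eigenvalue characterization
  have heval : ∀ μ : ℂ, a.charpoly.eval μ = ((μ • 1 : Matrix (Fin N) (Fin N) ℂ) - a).det := by
    intro μ
    rw [Matrix.charpoly, ← Polynomial.coe_evalRingHom, RingHom.map_det]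
    congr 1
    ext i j
    by_cases hij : i = j <;>
      simp [hij, charmatrix_apply, Matrix.diagonal_apply, Matrix.one_apply, Matrix.smul_apply]
  have hroot : ∀ μ : ℂ, a.charpoly.IsRoot μ ↔ ∃ v ≠ 0, a.mulVec v = μ • v := by
    intro μ
    rw [Polynomial.IsRoot, heval, ← Matrix.exists_mulVec_eq_zero_iff]
    constructor <;> rintro ⟨v, hv, hav⟩ <;> refine ⟨v, hv, ?_⟩
    · have := hav
      rw [Matrix.sub_mulVec, sub_eq_zero, Matrix.smul_mulVec, Matrix.one_mulVec] at this
      exact this.symm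
    · rw [Matrix.sub_mulVec, Matrix.smul_mulVec, Matrix.one_mulVec, hav, sub_self]
  -- eigenvalues are not -1
  have hne1 : ∀ (μ : ℂ) (v : Fin N → ℂ), v ≠ 0 → a.mulVec v = μ • v → (1 : ℂ) + μ ≠ 0 := by
    intro μ v hv hav hcon
    have h1 : (1 + a).mulVec v = 0 := by
      rw [Matrix.add_mulVec, Matrix.one_mulVec, hav,
        show v + μ • v = ((1:ℂ) + μ) • v by rw [add_smul, one_smul], hcon, zero_smul]
    have := Matrix.exists_mulVec_eq_zero_iff.mp ⟨v, hv, h1⟩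
    exact (Matrix.isUnit_iff_isUnit_det _).mp ha |>.ne_zero this
  -- eigenvalue map
  have hstep : ∀ μ : ℂ, a.charpoly.IsRoot μ → a.charpoly.IsRoot (μ * (1 + μ)⁻¹) := by
    intro μ hμ
    obtain ⟨v, hv, hav⟩ := (hroot μ).mp hμ
    have h1μ : (1 : ℂ) + μ ≠ 0 := hne1 μ v hv hav
    -- (1+a)⁻¹ v = (1+μ)⁻¹ • v
    have hinv : (1 + a)⁻¹.mulVec v = (1 + μ)⁻¹ • v := by
      have h2 : (1 + a).mulVec ((1 + μ)⁻¹ • v) = v := by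
        rw [Matrix.mulVec_smul, Matrix.add_mulVec, Matrix.one_mulVec, hav,
          show v + μ • v = ((1:ℂ) + μ) • v by rw [add_smul, one_smul],
          smul_smul, inv_mul_cancel₀ h1μ, one_smul]
      conv_lhs => rw [← h2]
      rw [Matrix.mulVec_mulVec,
        Matrix.nonsing_inv_mul _ ((Matrix.isUnit_iff_isUnit_det _).mp ha), Matrix.one_mulVec]
    have hrhs : (a * (1 + a)⁻¹).mulVec v = (μ * (1 + μ)⁻¹) • v := by
      rw [← Matrix.mulVec_mulVec, hinv, Matrix.mulVec_smul, hav, smul_smul, mul_comm]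
    -- b⁻¹ v is eigenvector
    have hbdet := (Matrix.isUnit_iff_isUnit_det b).mp hb
    have hlhs : b.mulVec (a.mulVec (b⁻¹.mulVec v)) = (μ * (1 + μ)⁻¹) • v := by
      rw [Matrix.mulVec_mulVec, Matrix.mulVec_mulVec, h, hrhs]
    have key : a.mulVec (b⁻¹.mulVec v) = (μ * (1 + μ)⁻¹) • b⁻¹.mulVec v := by
      have h3 := congrArg (fun x => b⁻¹.mulVec x) hlhs
      rw [Matrix.mulVec_smul, Matrix.mulVec_mulVec, Matrix.nonsing_inv_mul _ hbdet,
        Matrix.one_mulVec] at h3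
      exact h3
    refine (hroot _).mpr ⟨b⁻¹.mulVec v, ?_, key⟩
    intro hz
    apply hv
    have := congrArg (b.mulVec ·) hz
    simp only [Matrix.mulVec_mulVec, Matrix.mulVec_zero] at this
    rwa [Matrix.mul_nonsing_inv _ hbdet, Matrix.one_mulVec] at this
  -- charpoly ≠ 0
  have hcp0 : a.charpoly ≠ 0 := a.charpoly_monic.ne_zero
  -- all roots are zero
  have hzero : ∀ μ : ℂ, a.charpoly.IsRoot μ → μ = 0 := by
    intro μ hμ
    by_contra hμ0
    -- sequence of distinct roots
    have hseq : ∀ k : ℕ, (1 + (k : ℂ) * μ ≠ 0) ∧ a.charpoly.IsRoot (μ / (1 + (k : ℂ) * μ)) := by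
      intro k
      induction k with
      | zero => simpa using hμ
      | succ k ih =>
        obtain ⟨hk, hrk⟩ := ih
        obtain ⟨v, hv, hav⟩ := (hroot _).mp hrk
        have hne : (1 : ℂ) + μ / (1 + (k : ℂ) * μ) ≠ 0 := hne1 _ v hv hav
        have hfrac : 1 + μ / (1 + (k : ℂ) * μ) = (1 + ((k : ℂ) + 1) * μ) / (1 + (k : ℂ) * μ) := by
          rw [eq_div_iff hk, add_mul, div_mul_cancel₀ _ hk]
          ring
        have hk1 : 1 + ((k : ℂ) + 1) * μ ≠ 0 := by
          intro hc
          exact hne (by rw [hfrac, hc, zero_div])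
        constructor
        · push_cast; exact hk1
        · have h5 := hstep _ hrk
          have heq : μ / (1 + (k : ℂ) * μ) * (1 + μ / (1 + (k : ℂ) * μ))⁻¹
              = μ / (1 + ((k : ℂ) + 1) * μ) := by
            rw [hfrac]
            rw [inv_div, div_mul_div_comm, mul_comm (1 + (k:ℂ)*μ), mul_div_mul_right _ _ hk]
          rw [heq] at h5
          push_cast
          exact h5
    -- injectivity gives infinitely many roots
    have hinj : Function.Injective (fun k : ℕ => μ / (1 + (k : ℂ) * μ)) := by
      intro j k hjk
      simp only at hjk
      have hj := (hseq j).1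
      have hk := (hseq k).1
      rw [div_eq_div_iff hj hk] at hjk
      have h6 : (j : ℂ) * μ * μ = (k : ℂ) * μ * μ := by linear_combination -hjk
      have h7 : (j : ℂ) = (k : ℂ) := mul_right_cancel₀ hμ0 (mul_right_cancel₀ hμ0 h6)
      exact_mod_cast h7
    have hfin : (a.charpoly.roots.toFinset : Set ℂ).Finite := (a.charpoly.roots.toFinset).finite_toSet
    have hmaps : ∀ k : ℕ, μ / (1 + (k : ℂ) * μ) ∈ (a.charpoly.roots.toFinset : Set ℂ) := by
      intro k
      simp only [Finset.coe_sort_coe, Multiset.mem_toFinset, Finset.mem_coe]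
      exact (Polynomial.mem_roots hcp0).mpr ((hseq k).2)
    exact Set.infinite_of_injective_forall_mem
      (f := fun k : ℕ => μ / (1 + (k : ℂ) * μ)) hinj hmaps hfin
  -- conclude: charpoly = X ^ N
  have hprod := (IsAlgClosed.splits a.charpoly).eq_prod_roots_of_monic a.charpoly_monic
  have hallzero : ∀ r ∈ a.charpoly.roots, r = 0 := fun r hr =>
    hzero r ((Polynomial.mem_roots hcp0).mp hr)
  have hX : a.charpoly = X ^ (Multiset.card a.charpoly.roots) := by
    conv_lhs => rw [hprod]
    rw [Multiset.map_congr (g := fun _ => (X : Polynomial ℂ)) rfl (fun r hr => by rw [hallzero r hr, map_zero, sub_zero]),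
      Multiset.map_const', Multiset.prod_replicate]
  refine ⟨Multiset.card a.charpoly.roots, ?_⟩
  have := a.aeval_self_charpoly
  rwa [hX, map_pow, aeval_X] at this
end

section
/- Let (G, A, ρ, π) be a bijective cocycle datum: G a group, A an abelian group on which G acts by additive automorphisms via ρ, and π : G → A a bijection satisfying π(g h) = ρ(h)^{-1}(π(g)) + π(h) for all g, h ∈ G. Define T : A → A by T(x) = ρ(π^{-1}(x))(x). Then T is a bijection of A, and for every integer k and every x ∈ A, T(k·x) = k·T^k(x), where T^k denotes the k-th iterate of the bijection T (with negative k giving iterates of T^{-1}). That is, (A, T) is a T-structure. -/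
/-- Theorem A2: let `(G, A, ρ, π)` be a bijective cocycle datum, i.e. `π : G → A` is a
bijection (with two-sided inverse `πinv`) satisfying
`π(gh) = ρ(h)⁻¹(π(g)) + π(h)`. Define `T : A → A` by `T(x) = ρ(π⁻¹(x))(x)`.
Then `T` is a bijection of `A` and `T(k·x) = k·T^k(x)` for all `k : ℤ`, `x : A`;
that is, `(A,T)` is a `T`-structure. -/
theorem cocycle_gives_T_structure {G A : Type*} [Group G] [AddCommGroup A]
    (ρ : G →* Multiplicative (AddAut A)) (π : G → A)
    (hbij : Function.Bijective π)
    (hcoc : ∀ g h : G, π (g * h) = Multiplicative.toAdd (ρ h)⁻¹ (π g) + π h)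
    (πinv : A → G)
    (hli : Function.LeftInverse πinv π) (hri : Function.RightInverse πinv π)
    (T : A → A) (hT : ∀ x : A, T x = Multiplicative.toAdd (ρ (πinv x)) x) :
    ∃ e : Equiv.Perm A, (∀ x : A, e x = T x) ∧
      ∀ (k : ℤ) (x : A), e (k • x) = k • ((e ^ k) x) := by
  -- π 1 = 0
  have h1 : π 1 = 0 := by
    have h := hcoc 1 1
    simp only [one_mul, map_one, inv_one, toAdd_one, AddAut.zero_apply] at h
    exact (add_eq_right.mp h.symm)
  -- π g⁻¹ = - ρ g (π g)
  have hinv : ∀ g : G, π g⁻¹ = - Multiplicative.toAdd (ρ g) (π g) := by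
    intro g
    have h := hcoc g⁻¹ g
    rw [inv_mul_cancel, h1] at h
    have h2 : Multiplicative.toAdd (ρ g)⁻¹ (π g⁻¹) = - π g := by
      rw [eq_neg_iff_add_eq_zero]; exact h.symm
    have h3 := congrArg (fun y => Multiplicative.toAdd (ρ g) y) h2
    simpa [toAdd_inv] using h3
  -- alternative formula for T
  have hTform : ∀ x : A, T x = - π (πinv x)⁻¹ := by
    intro x
    rw [hT, hinv (πinv x), hri x, neg_neg]
  -- the inverse of T
  set S : A → A := fun y => π (πinv (-y))⁻¹ with hS
  have hleft : Function.LeftInverse S T := by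
    intro x
    have : -T x = π (πinv x)⁻¹ := by rw [hTform, neg_neg]
    simp only [hS]
    rw [this, hli, inv_inv, hri]
  have hright : Function.RightInverse S T := by
    intro y
    simp only [hS]
    rw [hTform, hli, inv_inv, hri, neg_neg]
  set e : Equiv.Perm A := ⟨T, S, hleft, hright⟩ with he
  have heT : ∀ x : A, e x = T x := fun x => rfl
  -- key step lemma
  have hL : ∀ (m : ℤ) (x : A),
      T (Multiplicative.toAdd (ρ (πinv (m • x))) x) =
        Multiplicative.toAdd (ρ (πinv ((m + 1) • x))) x := by
    intro m x
    set g : G := πinv (m • x) with hg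
    set c : G := πinv (Multiplicative.toAdd (ρ g) x) with hc
    have hcg : π (c * g) = (m + 1) • x := by
      rw [hcoc, hri, hri]
      have : Multiplicative.toAdd (ρ g)⁻¹ (Multiplicative.toAdd (ρ g) x) = x := by
        simp [toAdd_inv]
      rw [this, add_smul, one_smul, add_comm]
    have hpin : πinv ((m + 1) • x) = c * g := by rw [← hcg, hli]
    rw [hpin, map_mul, hT]
    rfl
  -- iterates of e
  have hC : ∀ (n : ℤ) (x : A), (e ^ n) x = Multiplicative.toAdd (ρ (πinv (n • x))) x := by
    intro n
    induction n using Int.induction_on with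
    | zero =>
      intro x
      have : πinv (0 : A) = 1 := by rw [← h1, hli]
      simp [this]
    | succ n ih =>
      intro x
      have hz : e ^ ((n : ℤ) + 1) = e * e ^ (n : ℤ) := by
        rw [show ((n : ℤ) + 1) = 1 + (n : ℤ) by ring, zpow_one_add]
      rw [hz, Equiv.Perm.mul_apply, ih x, heT, hL]
    | pred n ih =>
      intro x
      apply e.injective
      have hz : e * e ^ (-(n : ℤ) - 1) = e ^ (-(n : ℤ)) := by
        rw [← zpow_one_add]
        norm_num
      calc e ((e ^ (-(n : ℤ) - 1)) x) = (e * e ^ (-(n : ℤ) - 1)) x := rfl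
        _ = (e ^ (-(n : ℤ))) x := by rw [hz]
        _ = Multiplicative.toAdd (ρ (πinv ((-(n : ℤ)) • x))) x := ih x
        _ = e (Multiplicative.toAdd (ρ (πinv ((-(n : ℤ) - 1) • x))) x) := by
            rw [heT, hL]; norm_num
  refine ⟨e, heT, fun k x => ?_⟩
  rw [heT, hT, hC k x]
  exact map_zsmul (Multiplicative.toAdd (ρ (πinv (k • x))) : A ≃+ A) k x
end

section
/- Let p be a prime and let T be a T-structure on A = ℤ/pℤ, i.e., T : ℤ/pℤ → ℤ/pℤ is a bijection satisfying T(k·x) = k·T^k(x) for all x ∈ ℤ/pℤ and all integers k. Then T is the identity map. -/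
/-- Corollary A8: if `p` is a prime, then any `T`-structure on `ℤ/pℤ` — a bijection
`T` of `ℤ/pℤ` with `T(k·x) = k·T^k(x)` for all integers `k` and all `x` — is the
identity map. -/
theorem T_structure_on_ZMod_prime_is_id (p : ℕ) (hp : p.Prime)
    (e : Equiv.Perm (ZMod p))
    (hT : ∀ (k : ℤ) (x : ZMod p), e (k • x) = k • ((e ^ k) x)) :
    ∀ x : ZMod p, e x = x := by
  classical
  haveI : Fact p.Prime := ⟨hp⟩
  -- e fixes 0
  have h0 : e 0 = 0 := by simpa using hT 0 0
  -- e ^ p = 1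
  have hep : e ^ p = 1 := by
    have key : ∀ x : ZMod p, e x = (e ^ (p + 1 : ℕ)) x := by
      intro x
      have h := hT ((p : ℤ) + 1) x
      have hc : (((p : ℤ) + 1 : ℤ) : ZMod p) = 1 := by push_cast; simp
      rw [zsmul_eq_mul, zsmul_eq_mul, hc, one_mul, one_mul] at h
      have hz : (e ^ ((p : ℤ) + 1)) = e ^ (p + 1 : ℕ) := by
        rw [show ((p : ℤ) + 1) = ((p + 1 : ℕ) : ℤ) by push_cast; ring, zpow_natCast]
      rwa [hz] at h
    have heq : e = e ^ (p + 1 : ℕ) := Equiv.ext key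
    have : e * 1 = e * e ^ p := by rw [mul_one, ← pow_succ']; exact heq
    exact (mul_left_cancel this).symm
  -- zpowers e is a p-group
  have hpg : IsPGroup p (Subgroup.zpowers e) := by
    intro g
    refine ⟨1, ?_⟩
    obtain ⟨n, hn⟩ := g.2
    have hg : (g : Equiv.Perm (ZMod p)) ^ p = 1 := by
      rw [← hn, ← zpow_natCast (e ^ n) p, ← zpow_mul, mul_comm, zpow_mul,
        zpow_natCast, hep, one_zpow]
    apply Subtype.ext
    rw [pow_one]
    push_cast
    exact hg
  -- fixed points
  have hmod := hpg.card_modEq_card_fixedPoints (ZMod p)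
  have hcard : Nat.card (ZMod p) = p := by simp [Nat.card_eq_fintype_card, ZMod.card]
  have h0fix : (0 : ZMod p) ∈ MulAction.fixedPoints (Subgroup.zpowers e) (ZMod p) := by
    intro g
    obtain ⟨n, hn⟩ := g.2
    have : ∀ m : ℤ, (e ^ m) 0 = 0 := by
      intro m
      induction m using Int.induction_on with
      | zero => simp
      | succ k ih => rw [add_comm, zpow_add, zpow_one, Equiv.Perm.mul_apply, ih, h0]
      | pred k ih =>
          rw [sub_eq_add_neg, add_comm, zpow_add, Equiv.Perm.mul_apply, ih]
          have := congrArg (e⁻¹ : Equiv.Perm (ZMod p)) h0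
          simpa using this.symm
    show g • (0 : ZMod p) = 0
    have : (g : Equiv.Perm (ZMod p)) 0 = 0 := by rw [← hn]; exact this n
    simpa [Subgroup.smul_def, Equiv.Perm.smul_def] using this
  have hne : 0 < Nat.card (MulAction.fixedPoints (Subgroup.zpowers e) (ZMod p)) := by
    have : (MulAction.fixedPoints (Subgroup.zpowers e) (ZMod p)).Nonempty := ⟨0, h0fix⟩
    have hfin : (MulAction.fixedPoints (Subgroup.zpowers e) (ZMod p)).Finite :=
      Set.toFinite _
    exact Nat.card_pos_iff.mpr ⟨this.to_subtype, hfin.to_subtype⟩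
  have hle : Nat.card (MulAction.fixedPoints (Subgroup.zpowers e) (ZMod p)) ≤ p := by
    calc Nat.card (MulAction.fixedPoints (Subgroup.zpowers e) (ZMod p))
        ≤ Nat.card (ZMod p) := Nat.card_le_card_of_injective _ Subtype.val_injective
      _ = p := hcard
  have hdvd : p ∣ Nat.card (MulAction.fixedPoints (Subgroup.zpowers e) (ZMod p)) := by
    have : Nat.card (MulAction.fixedPoints (Subgroup.zpowers e) (ZMod p)) % p = 0 := by
      have := hmod
      rw [hcard] at this
      simpa [Nat.ModEq] using this.symm
    exact Nat.dvd_of_mod_eq_zero this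
  have hFcard : Nat.card (MulAction.fixedPoints (Subgroup.zpowers e) (ZMod p)) = p :=
    le_antisymm hle (Nat.le_of_dvd hne hdvd)
  -- fixed points = univ
  have huniv : MulAction.fixedPoints (Subgroup.zpowers e) (ZMod p) = Set.univ :=
    Set.eq_of_subset_of_ncard_le (Set.subset_univ _)
      (by rw [Set.ncard_univ, hcard, ← Nat.card_coe_set_eq, hFcard])
  intro x
  have hx : x ∈ MulAction.fixedPoints (Subgroup.zpowers e) (ZMod p) := by
    rw [huniv]; trivial
  have := hx ⟨e, Subgroup.mem_zpowers e⟩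
  simpa [Subgroup.smul_def, Equiv.Perm.smul_def] using this
end
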